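/- arXiv:2109.05552 — 7 statements merged into one kernel-verified Lean document; each statement's English description precedes it below -/
import Mathlib

section
/- Let H and M be n×n complex Hermitian matrices, and let P⁺ and P⁻ denote the orthogonal projections onto the strictly positive and strictly negative eigenspaces of H, respectively. Then 2P⁺ − I ⪯ M ⪯ I − 2P⁻ if and only if ‖M‖ ≤ 1 and Tr(HM) = ‖H‖_tr, where ‖·‖ is the operator norm and ‖·‖_tr is the trace norm. -/
open Matrix BigOperators

/-- The trace norm of a complex square matrix: the sum of its singular values. -/
noncomputable def traceNorm {m : Type*} [Fintype m] [DecidableEq m] (A : Matrix m m ℂ) : ℝ :=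
  ∑ i, Real.sqrt ((Matrix.isHermitian_conjTranspose_mul_self A).eigenvalues i)

/-- The operator norm of a complex square matrix: its largest singular value. -/
noncomputable def opNorm {m : Type*} [Fintype m] [DecidableEq m] (A : Matrix m m ℂ) : ℝ :=
  ⨆ i, Real.sqrt ((Matrix.isHermitian_conjTranspose_mul_self A).eigenvalues i)

/-- The orthogonal projection onto the strictly positive eigenspace of a Hermitian matrix. -/
noncomputable def posProj {n : ℕ} {H : Matrix (Fin n) (Fin n) ℂ} (hH : H.IsHermitian) :
    Matrix (Fin n) (Fin n) ℂ :=
  (hH.eigenvectorUnitary : Matrix (Fin n) (Fin n) ℂ) *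
    Matrix.diagonal (fun i => if 0 < hH.eigenvalues i then (1 : ℂ) else 0) *
    (star (hH.eigenvectorUnitary : Matrix (Fin n) (Fin n) ℂ))

/-- The orthogonal projection onto the strictly negative eigenspace of a Hermitian matrix. -/
noncomputable def negProj {n : ℕ} {H : Matrix (Fin n) (Fin n) ℂ} (hH : H.IsHermitian) :
    Matrix (Fin n) (Fin n) ℂ :=
  (hH.eigenvectorUnitary : Matrix (Fin n) (Fin n) ℂ) *
    Matrix.diagonal (fun i => if hH.eigenvalues i < 0 then (1 : ℂ) else 0) *
    (star (hH.eigenvectorUnitary : Matrix (Fin n) (Fin n) ℂ))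

/-- The orthogonal projection onto the range of a Hermitian matrix. -/
noncomputable def rangeProj {n : ℕ} {H : Matrix (Fin n) (Fin n) ℂ} (hH : H.IsHermitian) :
    Matrix (Fin n) (Fin n) ℂ :=
  (hH.eigenvectorUnitary : Matrix (Fin n) (Fin n) ℂ) *
    Matrix.diagonal (fun i => if hH.eigenvalues i ≠ 0 then (1 : ℂ) else 0) *
    (star (hH.eigenvectorUnitary : Matrix (Fin n) (Fin n) ℂ))

/-- `A` is Birkhoff–James orthogonal to `B` in the trace norm. -/
noncomputable def BJOrth {m : Type*} [Fintype m] [DecidableEq m] (A B : Matrix m m ℂ) : Prop :=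
  ∀ l : ℝ, traceNorm A ≤ traceNorm (A + (l : ℂ) • B)

/-- The principal submatrix of `A` indexed by the finite set `s`. -/
def principalSub {n : ℕ} (A : Matrix (Fin n) (Fin n) ℂ) (s : Finset (Fin n)) :
    Matrix {i // i ∈ s} {i // i ∈ s} ℂ :=
  A.submatrix (fun i => (i : Fin n)) (fun i => (i : Fin n))

open scoped ComplexOrder

/-!
Conjugating by the eigenvector unitary `U` of `H` turns `P⁺` and `P⁻` into diagonal `0/1`
projections. In any C⋆-algebra, for `-1 ≤ m ≤ 1` and a projection `p`, one has `2p - 1 ≤ m` iff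
`m p = p`: compressing by `p` shows `p (1 - m) p = 0`, and conversely
`m - (2p - 1) = (1 - p)(1 + m)(1 - p)`. Both sides of the equivalence force `-1 ≤ M ≤ 1`
(`‖M‖ ≤ 1` means `M⋆M ≤ 1`). For `N = U⋆MU`, whose diagonal then lies in `[-1, 1]`,
`Tr(HM) = ∑ λᵢ Nᵢᵢ ≤ ∑ |λᵢ| = ‖H‖_tr`, with equality iff `Nᵢᵢ = sign λᵢ` whenever `λᵢ ≠ 0`.
Since `1 ∓ N` is positive semidefinite, such a diagonal entry forces the whole column of `N`
to be `± eᵢ`, which says exactly `M P⁺ = P⁺` and `M P⁻ = -P⁻`.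
-/

open scoped MatrixOrder Matrix.Norms.L2Operator

section CStarAlgebra

variable {A : Type*} [CStarAlgebra A] [PartialOrder A] [StarOrderedRing A]

lemma mul_eq_zero_of_star_mul_mul_eq_zero {a p : A} (ha : 0 ≤ a) (h : star p * a * p = 0) :
    a * p = 0 := by
  obtain ⟨b, rfl⟩ := CStarAlgebra.nonneg_iff_eq_star_mul_self.mp ha
  have hbp : b * p = 0 := by
    rw [← CStarRing.star_mul_self_eq_zero_iff, star_mul, ← h]
    noncomm_ring
  rw [mul_assoc, hbp, mul_zero]

theorem IsStarProjection.two_smul_sub_one_le_iff {p m : A} (hp : IsStarProjection p)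
    (hm₁ : -1 ≤ m) (hm₂ : m ≤ 1) : 2 • p - 1 ≤ m ↔ m * p = p := by
  have hpp : p * p = p := hp.isIdempotentElem.eq
  have hps : star p = p := hp.isSelfAdjoint.star_eq
  constructor
  · intro h
    have h₁ : 0 ≤ p * (1 - m) * p := by
      simpa [hps] using star_left_conjugate_nonneg (sub_nonneg.mpr hm₂) p
    have h₂ : p * (1 - m) * p ≤ 0 := by
      have := star_left_conjugate_nonneg (sub_nonneg.mpr h) p
      rw [hps] at this
      convert neg_nonpos.mpr this using 1
      simp only [two_smul, mul_sub, sub_mul, mul_add, add_mul, mul_one, hpp]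
      noncomm_ring
    have := mul_eq_zero_of_star_mul_mul_eq_zero (sub_nonneg.mpr hm₂)
      (by rw [hps]; exact le_antisymm h₂ h₁)
    rw [sub_mul, one_mul, sub_eq_zero] at this
    exact this.symm
  · intro hmp
    have hm : star m = m := by
      simpa using (IsSelfAdjoint.of_nonneg (sub_nonneg.mpr hm₂)).star_eq
    have hpm : p * m = p := by simpa [hps, hm] using congrArg star hmp
    rw [← sub_nonneg]
    convert star_left_conjugate_nonneg (sub_nonneg.mpr hm₁) (1 - p) using 1
    simp only [star_sub, star_one, hps, two_smul, mul_sub, sub_mul, mul_add, add_mul, mul_one,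
      one_mul, hpp, hpm, hmp, sub_neg_eq_add]
    noncomm_ring

lemma IsStarProjection.neg_one_le_two_smul_sub_one {p : A} (hp : IsStarProjection p) :
    -1 ≤ 2 • p - 1 := by
  simpa [sub_eq_neg_add] using add_le_add_left (nsmul_nonneg hp.nonneg 2) (-1)

lemma IsSelfAdjoint.star_mul_self_le_one_iff {a : A} (ha : IsSelfAdjoint a) :
    star a * a ≤ 1 ↔ -1 ≤ a ∧ a ≤ 1 := by
  have hsq : star a * a = cfc (fun x : ℝ => x ^ 2) a := by
    rw [cfc_pow_id a 2, ha.star_eq, sq]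
  rw [hsq, cfc_le_one_iff _ a, CFC.le_one_iff (R := ℝ) a, ← map_one (algebraMap ℝ A), ← map_neg,
    algebraMap_le_iff_le_spectrum, ← forall₂_and]
  simp only [sq_le_one_iff_abs_le_one, abs_le]

end CStarAlgebra

section RCLike

variable {𝕜 : Type*} [RCLike 𝕜]

lemma RCLike.ofReal_mul_le_abs (l : ℝ) {r : 𝕜} (hr₁ : -1 ≤ r) (hr₂ : r ≤ 1) :
    (l : 𝕜) * r ≤ ((|l| : ℝ) : 𝕜) := by
  rcases le_or_gt 0 l with h | h
  · calc (l : 𝕜) * r ≤ l * 1 := mul_le_mul_of_nonneg_left hr₂ (by exact_mod_cast h)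
      _ = ((|l| : ℝ) : 𝕜) := by rw [abs_of_nonneg h, mul_one]
  · calc (l : 𝕜) * r ≤ l * (-1) := mul_le_mul_of_nonpos_left hr₁ (by exact_mod_cast h.le)
      _ = ((|l| : ℝ) : 𝕜) := by rw [abs_of_neg h]; push_cast; ring

lemma RCLike.ofReal_mul_eq_abs_iff (l : ℝ) (r : 𝕜) :
    (l : 𝕜) * r = ((|l| : ℝ) : 𝕜) ↔ (0 < l → r = 1) ∧ (l < 0 → -r = 1) := by
  rcases lt_trichotomy l 0 with h | rfl | h
  · have hl : (l : 𝕜) ≠ 0 := by exact_mod_cast h.ne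
    rw [abs_of_neg h, RCLike.ofReal_neg, ← mul_neg_one, mul_right_inj' hl, neg_eq_iff_eq_neg]
    simp [h, h.not_gt]
  · simp
  · have hl : (l : 𝕜) ≠ 0 := by exact_mod_cast h.ne'
    rw [abs_of_pos h, mul_eq_left₀ hl]
    simp [h, h.not_gt]

lemma RCLike.sum_ofReal_mul_eq_sum_abs_iff {ι : Type*} [Fintype ι] (l : ι → ℝ) {r : ι → 𝕜}
    (hr₁ : ∀ i, -1 ≤ r i) (hr₂ : ∀ i, r i ≤ 1) :
    ∑ i, (l i : 𝕜) * r i = ∑ i, ((|l i| : ℝ) : 𝕜) ↔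
      (∀ i, 0 < l i → r i = 1) ∧ (∀ i, l i < 0 → -r i = 1) := by
  rw [Finset.sum_eq_sum_iff_of_le fun i _ => ofReal_mul_le_abs (l i) (hr₁ i) (hr₂ i)]
  simp only [Finset.mem_univ, true_imp_iff, ofReal_mul_eq_abs_iff, forall_and]

lemma Matrix.apply_self_le_of_le {m : Type*} {A B : Matrix m m 𝕜} (h : A ≤ B) (i : m) :
    A i i ≤ B i i :=
  sub_nonneg.mp (by simpa using (le_iff.mp h).diag_nonneg (i := i))

variable {m : Type*} [Fintype m] [DecidableEq m]

lemma Matrix.trace_conjStarAlgAut (U : unitary (Matrix m m 𝕜)) (A : Matrix m m 𝕜) :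
    (Unitary.conjStarAlgAut 𝕜 _ U A).trace = A.trace := by
  rw [Unitary.conjStarAlgAut_apply, trace_mul_cycle, Unitary.coe_star_mul_self, one_mul]

lemma Matrix.IsHermitian.trace_cfc {A : Matrix m m 𝕜} (hA : A.IsHermitian) (f : ℝ → ℝ) :
    (cfc f A).trace = ∑ i, (f (hA.eigenvalues i) : 𝕜) := by
  rw [hA.cfc_eq, IsHermitian.cfc, trace_conjStarAlgAut, trace_diagonal]
  rfl

lemma Matrix.IsHermitian.trace_mul_eq_sum_eigenvalues_mul {H : Matrix m m 𝕜} (hH : H.IsHermitian)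
    (M : Matrix m m 𝕜) :
    (H * M).trace = ∑ i, (hH.eigenvalues i : 𝕜) *
      Unitary.conjStarAlgAut 𝕜 _ (star hH.eigenvectorUnitary) M i i := by
  set U := hH.eigenvectorUnitary
  have hM : M = Unitary.conjStarAlgAut 𝕜 _ U (Unitary.conjStarAlgAut 𝕜 _ (star U) M) := by
    rw [← Unitary.conjStarAlgAut_mul_apply]
    simp
  conv_lhs => rw [hH.spectral_theorem, hM, ← map_mul, trace_conjStarAlgAut]
  simp [Matrix.trace, diagonal_mul]

lemma Matrix.isStarProjection_diagonal_indicator (s : m → Prop) [DecidablePred s] :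
    IsStarProjection (diagonal fun i => if s i then (1 : 𝕜) else 0) where
  isIdempotentElem := by
    rw [IsIdempotentElem, diagonal_mul_diagonal]
    congr 1
    ext i
    by_cases h : s i <;> simp [h]
  isSelfAdjoint := by
    rw [IsSelfAdjoint, star_eq_conjTranspose, diagonal_conjTranspose]
    congr 1
    ext i
    by_cases h : s i <;> simp [h]

lemma Matrix.mul_diagonal_indicator_eq_self_iff {N : Matrix m m 𝕜} (hN : N ≤ 1) (s : m → Prop)
    [DecidablePred s] :
    N * diagonal (fun i => if s i then 1 else 0) = diagonal (fun i => if s i then 1 else 0) ↔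
      ∀ i, s i → N i i = 1 := by
  have hcol : ∀ i, N i i = 1 ↔ ∀ j, N j i = (1 : Matrix m m 𝕜) j i := fun i => by
    simpa [funext_iff, eq_comm (a := (0 : 𝕜)), sub_eq_zero, eq_comm (b := N _ _)] using
      (le_iff.mp hN).dotProduct_mulVec_zero_iff (Pi.single i 1)
  rw [← sub_eq_zero, ← sub_one_mul]
  simp only [← Matrix.ext_iff, mul_diagonal, Matrix.zero_apply, mul_ite, mul_one, mul_zero,
    ite_eq_right_iff, Matrix.sub_apply, sub_eq_zero, hcol]
  exact forall_comm.trans (forall_congr' fun _ => forall_comm)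

end RCLike

section ComplexMatrix

variable {m : Type*} [Fintype m] [DecidableEq m]

lemma opNorm_le_one_iff_conjTranspose_mul_self_le_one (A : Matrix m m ℂ) :
    opNorm A ≤ 1 ↔ Aᴴ * A ≤ 1 := by
  have hAA := isHermitian_conjTranspose_mul_self A
  rw [CFC.le_one_iff (R := ℝ) (Aᴴ * A) hAA.isSelfAdjoint, hAA.spectrum_real_eq_range_eigenvalues,
    Set.forall_mem_range]
  refine ⟨fun h i => ?_, fun h => Real.iSup_le (fun i => Real.sqrt_le_one.mpr (h i)) zero_le_one⟩
  exact Real.sqrt_le_one.mp ((le_ciSup (Set.finite_range _).bddAbove i).trans h)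

theorem opNorm_le_one_iff {M : Matrix m m ℂ} (hM : M.IsHermitian) :
    opNorm M ≤ 1 ↔ -1 ≤ M ∧ M ≤ 1 := by
  rw [opNorm_le_one_iff_conjTranspose_mul_self_le_one, ← star_eq_conjTranspose,
    hM.isSelfAdjoint.star_mul_self_le_one_iff]

lemma Matrix.IsHermitian.traceNorm_eq_sum_abs_eigenvalues {H : Matrix m m ℂ}
    (hH : H.IsHermitian) : traceNorm H = ∑ i, |hH.eigenvalues i| := by
  have hHH := isHermitian_conjTranspose_mul_self H
  have h : ((traceNorm H : ℝ) : ℂ) = (CFC.abs H).trace := by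
    rw [CFC.abs, star_eq_conjTranspose,
      CFC.sqrt_eq_real_sqrt _ (posSemidef_conjTranspose_mul_self H).nonneg, cfcₙ_eq_cfc,
      hHH.trace_cfc, traceNorm]
    push_cast
    rfl
  rw [CFC.abs_eq_cfc_norm H hH.isSelfAdjoint, hH.trace_cfc, ← RCLike.ofReal_sum] at h
  exact RCLike.ofReal_injective h

end ComplexMatrix

section SpectralProjections

variable {n : ℕ} {H : Matrix (Fin n) (Fin n) ℂ}

lemma posProj_eq_conjStarAlgAut (hH : H.IsHermitian) :
    posProj hH = Unitary.conjStarAlgAut ℂ _ hH.eigenvectorUnitary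
      (diagonal fun i => if 0 < hH.eigenvalues i then 1 else 0) := rfl

lemma negProj_eq_conjStarAlgAut (hH : H.IsHermitian) :
    negProj hH = Unitary.conjStarAlgAut ℂ _ hH.eigenvectorUnitary
      (diagonal fun i => if hH.eigenvalues i < 0 then 1 else 0) := rfl

lemma isStarProjection_posProj (hH : H.IsHermitian) : IsStarProjection (posProj hH) := by
  rw [posProj_eq_conjStarAlgAut]
  exact (isStarProjection_diagonal_indicator _).map _

lemma isStarProjection_negProj (hH : H.IsHermitian) : IsStarProjection (negProj hH) := by
  rw [negProj_eq_conjStarAlgAut]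
  exact (isStarProjection_diagonal_indicator _).map _

theorem trace_mul_eq_traceNorm_iff {M : Matrix (Fin n) (Fin n) ℂ} (hH : H.IsHermitian)
    (hM₁ : -1 ≤ M) (hM₂ : M ≤ 1) :
    (H * M).trace = traceNorm H ↔ M * posProj hH = posProj hH ∧ -M * negProj hH = negProj hH := by
  set U := hH.eigenvectorUnitary
  set e := Unitary.conjStarAlgAut ℂ (Matrix (Fin n) (Fin n) ℂ)
  set N := e (star U) M
  have hconj : ∀ X D, X * e U D = e U D ↔ e (star U) X * D = D := fun X D => by
    rw [← Unitary.conjStarAlgAut_symm, ← (EquivLike.injective (e U).symm).eq_iff, map_mul,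
      StarAlgEquiv.symm_apply_apply]
  have hN₁ : -1 ≤ N := by
    simpa [N, e] using star_left_conjugate_le_conjugate hM₁ (U : Matrix (Fin n) (Fin n) ℂ)
  have hN₂ : N ≤ 1 := by
    simpa [N, e] using star_left_conjugate_le_conjugate hM₂ (U : Matrix (Fin n) (Fin n) ℂ)
  calc (H * M).trace = traceNorm H
        ↔ ∑ i, (hH.eigenvalues i : ℂ) * N i i = ∑ i, ((|hH.eigenvalues i| : ℝ) : ℂ) := by
          rw [hH.trace_mul_eq_sum_eigenvalues_mul, hH.traceNorm_eq_sum_abs_eigenvalues,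
            Complex.ofReal_sum]
          rfl
    _ ↔ (∀ i, 0 < hH.eigenvalues i → N i i = 1) ∧ (∀ i, hH.eigenvalues i < 0 → -N i i = 1) :=
          RCLike.sum_ofReal_mul_eq_sum_abs_iff _ (fun i => by simpa using apply_self_le_of_le hN₁ i)
            (fun i => by simpa using apply_self_le_of_le hN₂ i)
    _ ↔ _ := by
          rw [posProj_eq_conjStarAlgAut, negProj_eq_conjStarAlgAut, hconj, hconj, map_neg,
            mul_diagonal_indicator_eq_self_iff hN₂,
            mul_diagonal_indicator_eq_self_iff (neg_le.mpr hN₁)]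
          rfl

end SpectralProjections

theorem stmt_1 {n : ℕ} (H M : Matrix (Fin n) (Fin n) ℂ)
    (hH : H.IsHermitian) (hM : M.IsHermitian) :
    ((M - (2 • posProj hH - 1)).PosSemidef ∧ ((1 - 2 • negProj hH) - M).PosSemidef) ↔
      (opNorm M ≤ 1 ∧ (H * M).trace = (traceNorm H : ℂ)) := by
  have hP := isStarProjection_posProj hH
  have hQ := isStarProjection_negProj hH
  have hneg : (1 - 2 • negProj hH) - M = -M - (2 • negProj hH - 1) := by abel
  rw [opNorm_le_one_iff hM, hneg, ← le_iff, ← le_iff]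
  constructor
  · rintro ⟨hPM, hQM⟩
    have hM₁ : -1 ≤ M := hP.neg_one_le_two_smul_sub_one.trans hPM
    have hM₂ : M ≤ 1 := neg_le_neg_iff.mp (hQ.neg_one_le_two_smul_sub_one.trans hQM)
    refine ⟨⟨hM₁, hM₂⟩, (trace_mul_eq_traceNorm_iff hH hM₁ hM₂).2 ⟨?_, ?_⟩⟩
    · exact (hP.two_smul_sub_one_le_iff hM₁ hM₂).1 hPM
    · exact (hQ.two_smul_sub_one_le_iff (neg_le_neg hM₂) (neg_le.mp hM₁)).1 hQM
  · rintro ⟨⟨hM₁, hM₂⟩, htr⟩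
    obtain ⟨hPM, hQM⟩ := (trace_mul_eq_traceNorm_iff hH hM₁ hM₂).1 htr
    exact ⟨(hP.two_smul_sub_one_le_iff hM₁ hM₂).2 hPM,
      (hQ.two_smul_sub_one_le_iff (neg_le_neg hM₂) (neg_le.mp hM₁)).2 hQM⟩
end

section
/- Let H, B be n×n Hermitian matrices with B positive semidefinite, and let P⁺ and P⁻ be the orthogonal projections onto the strictly positive and strictly negative eigenspaces of H. Then ‖H‖_tr ≤ ‖H + λB‖_tr for all real λ if and only if Tr(BP⁺) ≤ (1/2)Tr(B) and Tr(BP⁻) ≤ (1/2)Tr(B). -/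
open Matrix BigOperators

open scoped ComplexOrder

/-!
For Hermitian `M`, `‖M‖_tr = Tr M⁺ + Tr M⁻`, and this is the largest value of `Re Tr (X M)` over
`-1 ≤ X ≤ 1`, attained at a function of `M` with values `±1`. Both `P⁺ = χ(H)` and `P⁻ = χ(-H)`
come from the functional calculus, so each direction is argued for one projection and then
applied to `-H` for the other.

If `Tr (B P⁻) ≤ Tr B / 2` and `λ ≥ 0`, then `X = 1 - 2P⁻` attains `‖H‖_tr` at `H` and
`Re Tr (X B) = Tr B - 2 Tr (B P⁻) ≥ 0`, so `‖H + λB‖_tr ≥ Re Tr (X (H + λB)) ≥ ‖H‖_tr`.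

If `Tr (B P⁺) > Tr B / 2`, put `Q = 1 - P⁺` and split `H - μB = A - C` with
`A = H⁺ - μB + μ(1+κ) QBQ` and `C = H⁻ + μ(1+κ) QBQ`. Since `B ≤ (1+κ⁻¹) P⁺BP⁺ + (1+κ) QBQ` and
`H⁺ ≥ δ P⁺` for the smallest positive eigenvalue `δ` of `H`, `A ≥ 0` once `μ` is small compared
with `κ δ`, and then
`‖H - μB‖_tr ≤ Tr A + Tr C = ‖H‖_tr - μ (2 Tr (B P⁺) - Tr B) + 2μκ Tr (QBQ) < ‖H‖_tr`
for `κ` small.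
-/

open scoped MatrixOrder

variable {m : Type*} [Fintype m] [DecidableEq m]

local notation "χ" => Set.indicator (Set.Ioi (0 : ℝ)) (1 : ℝ → ℝ)

lemma Set.Finite.exists_pos_le_of_pos {s : Set ℝ} (hs : s.Finite) :
    ∃ δ : ℝ, 0 < δ ∧ ∀ x ∈ s, 0 < x → δ ≤ x := by
  by_cases hne : (s ∩ Set.Ioi 0).Nonempty
  · have hfin := hs.inter_of_left (Set.Ioi 0)
    exact ⟨sInf (s ∩ Set.Ioi 0), (hne.csInf_mem hfin).2,
      fun x hx hx0 => csInf_le hfin.bddBelow ⟨hx, hx0⟩⟩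
  · exact ⟨1, one_pos, fun x hx hx0 => absurd ⟨x, hx, hx0⟩ hne⟩

namespace Matrix

lemma continuousOn_spectrum (f : ℝ → ℝ) (A : Matrix m m ℂ) :
    ContinuousOn f (spectrum ℝ A) :=
  A.finite_real_spectrum.continuousOn f

lemma neg_one_le_cfc {A : Matrix m m ℂ} {f : ℝ → ℝ} (hf : ∀ x ∈ spectrum ℝ A, -1 ≤ f x) :
    -1 ≤ cfc f A := by
  rw [neg_le, ← cfc_neg]
  exact cfc_le_one _ _ fun x hx => neg_le.mp (hf x hx)

lemma re_trace_mul_nonneg {A B : Matrix m m ℂ} (hA : 0 ≤ A) (hB : 0 ≤ B) :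
    0 ≤ (A * B).trace.re := by
  have hsqrt : (A * B).trace = (CFC.sqrt A * B * CFC.sqrt A).trace := by
    nth_rw 1 [← CFC.sqrt_mul_sqrt_self A hA]
    rw [mul_assoc, trace_mul_comm]
  have hconj : 0 ≤ CFC.sqrt A * B * CFC.sqrt A :=
    (CFC.sqrt_nonneg A).isSelfAdjoint.conjugate_nonneg hB
  rw [hsqrt]
  exact (Complex.le_def.mp (nonneg_iff_posSemidef.mp hconj).trace_nonneg).1

lemma abs_re_trace_mul_le {A X : Matrix m m ℂ} (hA : 0 ≤ A) (hX₁ : -1 ≤ X) (hX₂ : X ≤ 1) :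
    |(X * A).trace.re| ≤ A.trace.re := by
  have h₁ := re_trace_mul_nonneg (sub_nonneg.mpr hX₂) hA
  have h₂ := re_trace_mul_nonneg (neg_le_iff_add_nonneg'.mp hX₁) hA
  simp only [sub_mul, add_mul, one_mul, trace_sub, trace_add, Complex.sub_re,
    Complex.add_re] at h₁ h₂
  exact abs_le.mpr ⟨by linarith, by linarith⟩

lemma le_algebraMap_re_trace {B : Matrix m m ℂ} (hB : 0 ≤ B) :
    B ≤ algebraMap ℝ (Matrix m m ℂ) B.trace.re := by
  have hB' := nonneg_iff_posSemidef.mp hB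
  refine le_algebraMap_of_spectrum_le (fun x hx => ?_) hB.isSelfAdjoint
  obtain ⟨i, rfl⟩ := hB'.1.spectrum_real_eq_range_eigenvalues ▸ hx
  rw [hB'.1.trace_eq_sum_eigenvalues, Complex.re_sum]
  exact (Finset.single_le_sum (fun j _ => hB'.eigenvalues_nonneg j) (Finset.mem_univ i)).trans_eq
    (Finset.sum_congr rfl fun j _ => (Complex.ofReal_re _).symm)

lemma conj_le_re_trace_smul {B P : Matrix m m ℂ} (hB : 0 ≤ B) (hP : IsStarProjection P) :
    P * B * P ≤ B.trace.re • P := by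
  have h := star_left_conjugate_le_conjugate (le_algebraMap_re_trace hB) P
  rwa [hP.isSelfAdjoint.star_eq, Algebra.algebraMap_eq_smul_one, mul_smul_comm, mul_one,
    smul_mul_assoc, hP.isIdempotentElem.eq] at h

lemma le_smul_conj_add_smul_conj {B P : Matrix m m ℂ} (hB : 0 ≤ B) (hP : IsSelfAdjoint P)
    {κ : ℝ} (hκ : 0 < κ) :
    B ≤ (1 + κ⁻¹) • (P * B * P) + (1 + κ) • ((1 - P) * B * (1 - P)) := by
  set Y := P - κ • (1 - P)
  have hY : star Y = Y := by simp [Y, star_sub, hP.star_eq, star_smul]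
  have hYBY : 0 ≤ κ⁻¹ • (star Y * B * Y) :=
    smul_nonneg (inv_nonneg.mpr hκ.le) (star_left_conjugate_nonneg hB Y)
  refine sub_nonneg.mp (hYBY.trans_eq ?_)
  rw [hY]
  simp only [Y, sub_mul, mul_sub, smul_mul_assoc, mul_smul_comm, one_mul, mul_one, smul_sub,
    smul_smul]
  match_scalars <;> field_simp <;> ring

end Matrix

open Matrix

lemma traceNorm_eq_re_trace_abs (A : Matrix m m ℂ) : traceNorm A = (CFC.abs A).trace.re := by
  have hA := isHermitian_conjTranspose_mul_self A
  rw [CFC.abs, CFC.sqrt_eq_real_sqrt _ (star_mul_self_nonneg A), cfcₙ_eq_cfc,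
    star_eq_conjTranspose, hA.cfc_eq, IsHermitian.cfc, Unitary.conjStarAlgAut_apply,
    trace_mul_cycle, Unitary.coe_star_mul_self, one_mul, trace_diagonal, Complex.re_sum,
    traceNorm]
  rfl

lemma traceNorm_neg (A : Matrix m m ℂ) : traceNorm (-A) = traceNorm A := by
  rw [traceNorm_eq_re_trace_abs, traceNorm_eq_re_trace_abs, CFC.abs_neg]

lemma traceNorm_eq_re_trace_posPart_add_negPart {A : Matrix m m ℂ} (hA : IsSelfAdjoint A) :
    traceNorm A = (A⁺).trace.re + (A⁻).trace.re := by
  rw [traceNorm_eq_re_trace_abs, ← CFC.posPart_add_negPart A hA, trace_add, Complex.add_re]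

lemma re_trace_mul_le_traceNorm {A X : Matrix m m ℂ} (hA : IsSelfAdjoint A) (hX₁ : -1 ≤ X)
    (hX₂ : X ≤ 1) : (X * A).trace.re ≤ traceNorm A := by
  have hpos := abs_re_trace_mul_le (CFC.posPart_nonneg A) hX₁ hX₂
  have hneg := abs_re_trace_mul_le (CFC.negPart_nonneg A) hX₁ hX₂
  rw [traceNorm_eq_re_trace_posPart_add_negPart hA]
  nth_rw 1 [← CFC.posPart_sub_negPart A hA]
  rw [mul_sub, trace_sub, Complex.sub_re]
  linarith [le_abs_self (X * A⁺).trace.re, neg_abs_le (X * A⁻).trace.re]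

lemma re_trace_cfc_mul_self_eq_traceNorm {A : Matrix m m ℂ} (hA : IsSelfAdjoint A)
    {f : ℝ → ℝ} (hf : ∀ x ∈ spectrum ℝ A, f x * x = |x|) :
    (cfc f A * A).trace.re = traceNorm A := by
  rw [traceNorm_eq_re_trace_abs, CFC.abs_eq_cfc_norm A hA]
  nth_rw 2 [← cfc_id' ℝ A]
  rw [← cfc_mul _ _ A (continuousOn_spectrum _ _) (continuousOn_spectrum _ _),
    cfc_congr fun x hx => (hf x hx).trans (Real.norm_eq_abs x).symm]

lemma traceNorm_sub_le {A C : Matrix m m ℂ} (hA : 0 ≤ A) (hC : 0 ≤ C) :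
    traceNorm (A - C) ≤ A.trace.re + C.trace.re := by
  set sgn : ℝ → ℝ := fun x => if 0 ≤ x then 1 else -1
  set X := cfc sgn (A - C)
  have hX₁ : -1 ≤ X := neg_one_le_cfc fun x _ => by simp only [sgn]; split_ifs <;> norm_num
  have hX₂ : X ≤ 1 := cfc_le_one _ _ fun x _ => by simp only [sgn]; split_ifs <;> norm_num
  have hXM : (X * (A - C)).trace.re = traceNorm (A - C) :=
    re_trace_cfc_mul_self_eq_traceNorm (hA.isSelfAdjoint.sub hC.isSelfAdjoint) fun x _ => by
      simp only [sgn]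
      split_ifs with hx
      · rw [one_mul, abs_of_nonneg hx]
      · rw [neg_one_mul, abs_of_neg (not_le.mp hx)]
  rw [← hXM, mul_sub, trace_sub, Complex.sub_re]
  linarith [le_abs_self (X * A).trace.re, neg_abs_le (X * C).trace.re,
    abs_re_trace_mul_le hA hX₁ hX₂, abs_re_trace_mul_le hC hX₁ hX₂]

lemma exists_traceNorm_sub_sub_smul_lt {G K P B : Matrix m m ℂ} (hK : 0 ≤ K)
    (hP : IsStarProjection P) {δ : ℝ} (hδ : 0 < δ) (hPG : δ • P ≤ G) (hB : 0 ≤ B)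
    (h : B.trace.re < 2 * (B * P).trace.re) :
    ∃ μ : ℝ, 0 < μ ∧ traceNorm (G - K - μ • B) < G.trace.re + K.trace.re := by
  set β := B.trace.re
  set ε := 2 * (B * P).trace.re - β
  have hε : 0 < ε := sub_pos.mpr h
  have hβ : 0 ≤ β := (Complex.le_def.mp (nonneg_iff_posSemidef.mp hB).trace_nonneg).1
  set κ := ε / (β + 1)
  have hκ : 0 < κ := div_pos hε (by linarith)
  set μ := δ / ((1 + κ⁻¹) * (β + 1))
  have hμ : 0 < μ := div_pos hδ (by positivity)
  set c := μ * (1 + κ⁻¹)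
  have hcβ : c * β ≤ δ := by
    rw [show c * β = δ * (β / (β + 1)) by simp only [c, μ]; field_simp]
    exact mul_le_of_le_one_right hδ.le ((div_le_one (by linarith)).mpr (by linarith))
  set R := (1 - P) * B * (1 - P)
  have hR : 0 ≤ R := hP.one_sub.isSelfAdjoint.conjugate_nonneg hB
  have hA : 0 ≤ G - μ • B + (μ * (1 + κ)) • R := by
    have h₁ : 0 ≤ G - δ • P := sub_nonneg.mpr hPG
    have h₂ : 0 ≤ (δ - c * β) • P := smul_nonneg (sub_nonneg.mpr hcβ) hP.nonneg
    have h₃ : 0 ≤ c • (β • P - P * B * P) :=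
      smul_nonneg (by positivity) (sub_nonneg.mpr (conj_le_re_trace_smul hB hP))
    have h₄ : 0 ≤ μ • ((1 + κ⁻¹) • (P * B * P) + (1 + κ) • R - B) :=
      smul_nonneg hμ.le (sub_nonneg.mpr (le_smul_conj_add_smul_conj hB hP.isSelfAdjoint hκ))
    convert add_nonneg (add_nonneg (add_nonneg h₁ h₂) h₃) h₄ using 1
    simp only [c]
    module
  have hC : 0 ≤ K + (μ * (1 + κ)) • R := add_nonneg hK (smul_nonneg (by positivity) hR)
  have hRtr : R.trace.re = β - (B * P).trace.re := by
    rw [trace_mul_cycle, hP.one_sub.isIdempotentElem.eq, sub_mul, one_mul, trace_sub,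
      trace_mul_comm P, Complex.sub_re]
  have hκβ : κ * (β - ε) < ε := by
    rw [div_mul_eq_mul_div, div_lt_iff₀ (by linarith)]
    nlinarith
  refine ⟨μ, hμ, ?_⟩
  calc traceNorm (G - K - μ • B)
      = traceNorm ((G - μ • B + (μ * (1 + κ)) • R) - (K + (μ * (1 + κ)) • R)) := by
        congr 1; abel
    _ ≤ (G - μ • B + (μ * (1 + κ)) • R).trace.re + (K + (μ * (1 + κ)) • R).trace.re :=
        traceNorm_sub_le hA hC
    _ = G.trace.re + K.trace.re - μ * (ε - κ * (β - ε)) := by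
        simp only [trace_add, trace_sub, trace_smul, Complex.add_re, Complex.sub_re,
          Complex.smul_re, smul_eq_mul, hRtr]
        ring
    _ < G.trace.re + K.trace.re := by nlinarith

lemma isStarProjection_cfc_indicator (H : Matrix m m ℂ) : IsStarProjection (cfc χ H) where
  isIdempotentElem := by
    rw [IsIdempotentElem, ← cfc_mul _ _ H (continuousOn_spectrum _ _) (continuousOn_spectrum _ _)]
    exact cfc_congr fun x _ => by by_cases hx : 0 < x <;> simp [hx]
  isSelfAdjoint := cfc_predicate _ _

lemma exists_pos_smul_cfc_indicator_le_posPart (H : Matrix m m ℂ) :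
    ∃ δ : ℝ, 0 < δ ∧ δ • cfc χ H ≤ H⁺ := by
  obtain ⟨δ, hδ, hle⟩ := finite_real_spectrum.exists_pos_le_of_pos (s := spectrum ℝ H)
  refine ⟨δ, hδ, ?_⟩
  rw [CFC.posPart_def, cfcₙ_eq_cfc, ← cfc_const_mul δ _ H (continuousOn_spectrum _ _)]
  refine cfc_mono (fun x hxs => ?_) (continuousOn_spectrum _ _) (continuousOn_spectrum _ _)
  by_cases hx : 0 < x
  · simpa [hx, posPart_eq_self.mpr hx.le] using hle x hxs hx
  · simp [hx]

lemma cfc_one_sub_two_mul_indicator_neg {H : Matrix m m ℂ} (hH : IsSelfAdjoint H) :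
    cfc (fun x => 1 - 2 * χ (-x)) H = 1 - (2 : ℝ) • cfc χ (-H) := by
  rw [cfc_sub _ _ H (continuousOn_spectrum _ _) (continuousOn_spectrum _ _),
    cfc_const_one ℝ H hH, cfc_const_mul (2 : ℝ) (fun x => χ (-x)) H (continuousOn_spectrum _ _),
    cfc_comp_neg _ _ ((finite_real_spectrum.image _).continuousOn _) hH]

lemma traceNorm_le_traceNorm_add_smul {H B : Matrix m m ℂ} (hH : IsSelfAdjoint H) (hB : 0 ≤ B)
    (h : 2 * (B * cfc χ (-H)).trace.re ≤ B.trace.re) {μ : ℝ} (hμ : 0 ≤ μ) :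
    traceNorm H ≤ traceNorm (H + μ • B) := by
  set f : ℝ → ℝ := fun x => 1 - 2 * χ (-x)
  have hf : ∀ x, f x = if x < 0 then -1 else 1 := fun x => by
    by_cases hx : x < 0 <;> norm_num [f, hx]
  have hXH : (cfc f H * H).trace.re = traceNorm H :=
    re_trace_cfc_mul_self_eq_traceNorm hH fun x _ => by
      rw [hf]
      split_ifs with hx
      · rw [neg_one_mul, abs_of_neg hx]
      · rw [one_mul, abs_of_nonneg (not_lt.mp hx)]
  have hXB : 0 ≤ (cfc f H * B).trace.re := by
    rw [cfc_one_sub_two_mul_indicator_neg hH, sub_mul, one_mul, trace_sub, smul_mul_assoc,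
      trace_smul, trace_mul_comm, Complex.sub_re, Complex.smul_re, smul_eq_mul]
    linarith
  have key := re_trace_mul_le_traceNorm (hH.add ((IsSelfAdjoint.all μ).smul hB.isSelfAdjoint))
    (neg_one_le_cfc (f := f) fun x _ => by rw [hf]; split_ifs <;> norm_num)
    (cfc_le_one f H fun x _ => by rw [hf]; split_ifs <;> norm_num)
  rw [mul_add, trace_add, Complex.add_re, hXH, mul_smul_comm, trace_smul, Complex.smul_re,
    smul_eq_mul] at key
  nlinarith

lemma two_mul_re_trace_mul_cfc_le {H B : Matrix m m ℂ} (hH : IsSelfAdjoint H) (hB : 0 ≤ B)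
    (hBJ : ∀ μ : ℝ, 0 < μ → traceNorm H ≤ traceNorm (H - μ • B)) :
    2 * (B * cfc χ H).trace.re ≤ B.trace.re := by
  by_contra! h
  obtain ⟨δ, hδ, hδP⟩ := exists_pos_smul_cfc_indicator_le_posPart H
  obtain ⟨μ, hμ, hlt⟩ := exists_traceNorm_sub_sub_smul_lt (CFC.negPart_nonneg H)
    (isStarProjection_cfc_indicator H) hδ hδP hB h
  rw [CFC.posPart_sub_negPart H hH, ← traceNorm_eq_re_trace_posPart_add_negPart hH] at hlt
  exact (hBJ μ hμ).not_gt hlt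

lemma posProj_eq_cfc {n : ℕ} {H : Matrix (Fin n) (Fin n) ℂ} (hH : H.IsHermitian) :
    posProj hH = cfc χ H := by
  rw [hH.cfc_eq, IsHermitian.cfc, Unitary.conjStarAlgAut_apply, posProj]
  congr 3 with i
  by_cases hi : 0 < hH.eigenvalues i <;> simp [hi]

lemma negProj_eq_cfc {n : ℕ} {H : Matrix (Fin n) (Fin n) ℂ} (hH : H.IsHermitian) :
    negProj hH = cfc χ (-H) := by
  refine Eq.trans ?_ (cfc_comp_neg χ H ((finite_real_spectrum.image _).continuousOn _) hH)
  rw [hH.cfc_eq, IsHermitian.cfc, Unitary.conjStarAlgAut_apply, negProj]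
  congr 3 with i
  by_cases hi : hH.eigenvalues i < 0 <;> simp [hi]

theorem stmt_2 {n : ℕ} (H B : Matrix (Fin n) (Fin n) ℂ)
    (hH : H.IsHermitian) (hB : B.PosSemidef) :
    (∀ l : ℝ, traceNorm H ≤ traceNorm (H + (l : ℂ) • B)) ↔
      (((B * posProj hH).trace).re ≤ (1 / 2) * (B.trace).re ∧
        ((B * negProj hH).trace).re ≤ (1 / 2) * (B.trace).re) := by
  have hH' : IsSelfAdjoint H := hH
  have hB' : 0 ≤ B := nonneg_iff_posSemidef.mpr hB
  rw [posProj_eq_cfc, negProj_eq_cfc]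
  constructor
  · intro hBJ
    have hpos := two_mul_re_trace_mul_cfc_le hH' hB' fun μ _ => by
      simpa [sub_eq_add_neg] using hBJ (-μ)
    have hneg := two_mul_re_trace_mul_cfc_le hH'.neg hB' fun μ _ => by
      rw [traceNorm_neg, ← neg_add', traceNorm_neg]
      exact hBJ μ
    constructor <;> linarith
  · rintro ⟨hpos, hneg⟩ l
    rcases le_total 0 l with hl | hl
    · exact traceNorm_le_traceNorm_add_smul hH' hB' (by linarith) hl
    · have := traceNorm_le_traceNorm_add_smul hH'.neg hB' (by rw [neg_neg]; linarith)
        (neg_nonneg.mpr hl)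
      rwa [traceNorm_neg, neg_smul, ← neg_add, traceNorm_neg] at this
end

section
/- Let n be odd and let H be an n×n Hermitian matrix that is Birkhoff–James orthogonal in the trace norm to eⱼeⱼ* for each 1 ≤ j ≤ n. Then 0 is an eigenvalue of H. -/
open Matrix BigOperators

/-! If `H` were invertible, with `δ = minᵢ |λᵢ| > 0`, the trace norm would be differentiable at `H`
with derivative `B ↦ re tr (S B)`, where `S` is the sign of `H`. Orthogonality to every `eⱼeⱼ*`
would then force `Sⱼⱼ = 0` for all `j`, hence `tr S = 0`; but `tr S` is a sum of `n` signs `±1`,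
which is odd.

The derivative is replaced by an explicit estimate. The sign `T` of `X = H + l eⱼeⱼ*` is a Hermitian
unitary with `tr (T X) = ‖X‖₁`, so orthogonality gives `δ (n - re tr (T S)) ≤ l re Tⱼⱼ`, while
`|Tⱼⱼ - Sⱼⱼ|² ≤ 2 (n - re tr (T S))`. Together these give `0 ≤ 2 δ l re Sⱼⱼ + l²` for every
real `l`, so `re Sⱼⱼ = 0`. -/

noncomputable def signOne (x : ℝ) : ℤ := if 0 ≤ x then 1 else -1

lemma signOne_eq_one_or_eq_neg_one (x : ℝ) : signOne x = 1 ∨ signOne x = -1 := by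
  unfold signOne; split_ifs <;> simp

lemma signOne_mul_self (x : ℝ) : (signOne x : ℝ) * x = |x| := by
  unfold signOne; split_ifs with h
  · simp [abs_of_nonneg h]
  · simp [abs_of_neg (not_le.mp h)]

lemma Finset.odd_sum_of_odd_card {ι : Type*} {s : Finset ι} {f : ι → ℤ}
    (hf : ∀ i ∈ s, f i = 1 ∨ f i = -1) (hs : Odd s.card) : Odd (∑ i ∈ s, f i) := by
  have heven : Even (∑ i ∈ s, (f i - 1)) := Finset.even_sum _ fun i hi => by
    rcases hf i hi with h | h <;> simp [h]
  simpa [Finset.sum_sub_distrib] using heven.add_odd (Int.odd_coe_nat _ |>.mpr hs)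

namespace Matrix

variable {m : Type*}

lemma IsHermitian.add_real_smul_single [DecidableEq m] {H : Matrix m m ℂ} (hH : H.IsHermitian)
    (l : ℝ) (j : m) : (H + (l : ℂ) • single j j 1).IsHermitian :=
  hH.add <| by simp [IsHermitian, conjTranspose_single]

variable [Fintype m]

lemma norm_apply_sq_le_re_trace_conjTranspose_mul_self (A : Matrix m m ℂ) (i j : m) :
    ‖A i j‖ ^ 2 ≤ (Aᴴ * A).trace.re := by
  have htr : (Aᴴ * A).trace.re = ∑ j, ∑ i, ‖A i j‖ ^ 2 := by
    simp [trace, mul_apply, Complex.conj_mul', ← Complex.ofReal_pow]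
  rw [htr]
  calc ‖A i j‖ ^ 2 ≤ ∑ i, ‖A i j‖ ^ 2 :=
        Finset.single_le_sum (f := fun i => ‖A i j‖ ^ 2) (fun _ _ => sq_nonneg _)
          (Finset.mem_univ i)
    _ ≤ ∑ j, ∑ i, ‖A i j‖ ^ 2 :=
        Finset.single_le_sum (f := fun j => ∑ i, ‖A i j‖ ^ 2)
          (fun _ _ => Finset.sum_nonneg fun _ _ => sq_nonneg _) (Finset.mem_univ j)

variable [DecidableEq m]

lemma norm_sub_apply_sq_le {T S : Matrix m m ℂ} (hT : T ∈ unitaryGroup m ℂ)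
    (hS : S ∈ unitaryGroup m ℂ) (j : m) :
    ‖T j j - S j j‖ ^ 2 ≤ 2 * (Fintype.card m - (Tᴴ * S).trace.re) := by
  have hexp : (T - S)ᴴ * (T - S) = Tᴴ * T + Sᴴ * S - (Tᴴ * S + (Tᴴ * S)ᴴ) := by
    simp only [conjTranspose_sub, conjTranspose_mul, conjTranspose_conjTranspose]
    noncomm_ring
  have hT1 : Tᴴ * T = 1 := mem_unitaryGroup_iff'.mp hT
  have hS1 : Sᴴ * S = 1 := mem_unitaryGroup_iff'.mp hS
  have := norm_apply_sq_le_re_trace_conjTranspose_mul_self (T - S) j j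
  rw [hexp, hT1, hS1, trace_sub, trace_add, trace_add, trace_conjTranspose, trace_one] at this
  simp only [sub_apply, Complex.sub_re, Complex.add_re, Complex.star_def, Complex.conj_re,
    Complex.natCast_re] at this
  linarith

lemma trace_mul_mul_diagonal_mul {R : Type*} [CommSemiring R] (T U V : Matrix m m R) (d : m → R) :
    (T * (U * diagonal d * V)).trace = ∑ i, (V * T * U) i i * d i := by
  rw [← Matrix.mul_assoc, Matrix.trace_mul_cycle, ← Matrix.mul_assoc]
  simp [trace, mul_diagonal]

lemma star_mul_conj_mul_eq {U : Matrix m m ℂ} (hU : U ∈ unitaryGroup m ℂ) (M : Matrix m m ℂ) :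
    star U * (U * M * star U) * U = M := by
  simp only [Matrix.mul_assoc, mem_unitaryGroup_iff'.mp hU, Matrix.mul_one]
  rw [← Matrix.mul_assoc, mem_unitaryGroup_iff'.mp hU, Matrix.one_mul]

namespace IsHermitian

lemma map_eigenvalues_of_eq_cfc {A B : Matrix m m ℂ} (hA : A.IsHermitian)
    (hB : B.IsHermitian) {f : ℝ → ℝ} (h : B = cfc f A) :
    Finset.univ.val.map hB.eigenvalues = Finset.univ.val.map (f ∘ hA.eigenvalues) := by
  subst h
  have hroots := hB.roots_charpoly_eq_eigenvalues
  rw [hA.charpoly_cfc_eq, Polynomial.roots_prod _ _ (by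
    simp [Finset.prod_ne_zero_iff, Polynomial.X_sub_C_ne_zero])] at hroots
  simp only [Polynomial.roots_X_sub_C, Multiset.bind_singleton] at hroots
  apply Multiset.map_injective Complex.ofReal_injective
  simpa [Multiset.map_map, Function.comp_def] using hroots.symm

variable {X : Matrix m m ℂ} (hX : X.IsHermitian)

lemma traceNorm_eq_sum_abs_eigenvalues_s8 : traceNorm X = ∑ i, |hX.eigenvalues i| := by
  have hXX := isHermitian_conjTranspose_mul_self X
  have hmap := hX.map_eigenvalues_of_eq_cfc hXX (f := (· ^ 2)) <| by
    rw [cfc_pow_id X 2 hX.isSelfAdjoint, hX.eq, sq]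
  simp only [traceNorm, Finset.sum_eq_multiset_sum]
  change (Multiset.map (Real.sqrt ∘ hXX.eigenvalues) _).sum = _
  rw [← Multiset.map_map, hmap, Multiset.map_map]
  simp [Function.comp_def, Real.sqrt_sq_eq_abs]

lemma eq_conj_diagonal_eigenvalues :
    X = (hX.eigenvectorUnitary : Matrix m m ℂ) * diagonal (fun i => (hX.eigenvalues i : ℂ)) *
      star (hX.eigenvectorUnitary : Matrix m m ℂ) := by
  conv_lhs => rw [hX.spectral_theorem, Unitary.conjStarAlgAut_apply]
  rfl

/-- The sign of a zero eigenvalue is taken to be `1`, so that the sign of `X` is unitary. -/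
noncomputable def unitarySign : Matrix m m ℂ :=
  (hX.eigenvectorUnitary : Matrix m m ℂ) * diagonal (fun i => (signOne (hX.eigenvalues i) : ℂ)) *
    star (hX.eigenvectorUnitary : Matrix m m ℂ)

lemma unitarySign_mem_unitaryGroup : hX.unitarySign ∈ unitaryGroup m ℂ := by
  have hD : diagonal (fun i => (signOne (hX.eigenvalues i) : ℂ)) ∈ unitaryGroup m ℂ := by
    rw [mem_unitaryGroup_iff, star_eq_conjTranspose, diagonal_conjTranspose,
      diagonal_mul_diagonal, ← diagonal_one]
    congr 1; funext i
    rcases signOne_eq_one_or_eq_neg_one (hX.eigenvalues i) with h | h <;> simp [h]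
  exact Submonoid.mul_mem _ (Submonoid.mul_mem _ hX.eigenvectorUnitary.2 hD)
    (Unitary.star_mem hX.eigenvectorUnitary.2)

lemma isHermitian_unitarySign : hX.unitarySign.IsHermitian :=
  isHermitian_mul_mul_conjTranspose _ <| isHermitian_diagonal_of_self_adjoint _ <| by
    ext i; simp

lemma trace_unitarySign : hX.unitarySign.trace = ∑ i, (signOne (hX.eigenvalues i) : ℂ) := by
  rw [unitarySign, trace_mul_cycle, mem_unitaryGroup_iff'.mp hX.eigenvectorUnitary.2,
    Matrix.one_mul, trace_diagonal]

lemma trace_unitarySign_mul_self :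
    (hX.unitarySign * X).trace = ∑ i, ((|hX.eigenvalues i| : ℝ) : ℂ) := by
  rw [congrArg (hX.unitarySign * ·) hX.eq_conj_diagonal_eigenvalues, trace_mul_mul_diagonal_mul,
    unitarySign, star_mul_conj_mul_eq hX.eigenvectorUnitary.2]
  simp [← signOne_mul_self]

/-- Among unitaries `T`, `re tr (T X)` is largest at the sign of `X`; if all `|λᵢ| ≥ δ`, moving
`T` away from the sign costs at least `δ` times the defect `n - re tr (T · sign X)`. -/
lemma re_trace_mul_add_le {T : Matrix m m ℂ} (hT : T ∈ unitaryGroup m ℂ) {δ : ℝ}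
    (hδ : ∀ i, δ ≤ |hX.eigenvalues i|) :
    (T * X).trace.re + δ * (Fintype.card m - (T * hX.unitarySign).trace.re) ≤
      ∑ i, |hX.eigenvalues i| := by
  set U : Matrix m m ℂ := ↑hX.eigenvectorUnitary
  set w : m → ℝ := fun i => (star U * T * U) i i |>.re
  have hw : ∀ i, |w i| ≤ 1 := fun i =>
    (Complex.abs_re_le_norm _).trans <| entry_norm_bound_of_unitary
      (Submonoid.mul_mem _ (Submonoid.mul_mem _ (Unitary.star_mem hX.eigenvectorUnitary.2) hT)
        hX.eigenvectorUnitary.2) i i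
  have hTX : (T * X).trace.re = ∑ i, w i * hX.eigenvalues i := by
    rw [congrArg (T * ·) hX.eq_conj_diagonal_eigenvalues]
    simp [trace_mul_mul_diagonal_mul, Complex.re_sum, w, U]
  have hTS : (T * hX.unitarySign).trace.re = ∑ i, w i * signOne (hX.eigenvalues i) := by
    simp [unitarySign, trace_mul_mul_diagonal_mul, Complex.re_sum, w, U]
  have hterm : ∀ i, w i * hX.eigenvalues i + δ * (1 - w i * signOne (hX.eigenvalues i)) ≤
      |hX.eigenvalues i| := by
    intro i
    have habs := signOne_mul_self (hX.eigenvalues i)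
    have := hδ i
    rcases signOne_eq_one_or_eq_neg_one (hX.eigenvalues i) with h | h <;>
      simp only [h, Int.cast_one, Int.cast_neg] at habs ⊢ <;>
      nlinarith [abs_le.mp (hw i)]
  calc _ = ∑ i, (w i * hX.eigenvalues i + δ * (1 - w i * signOne (hX.eigenvalues i))) := by
        simp [hTX, hTS, Finset.sum_add_distrib, ← Finset.mul_sum, Finset.sum_sub_distrib]
    _ ≤ _ := Finset.sum_le_sum fun i _ => hterm i

lemma re_unitarySign_apply_self_eq_zero_of_bjOrth {H : Matrix m m ℂ} (hH : H.IsHermitian)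
    {δ : ℝ} (hδ : 0 < δ) (hδH : ∀ i, δ ≤ |hH.eigenvalues i|) {j : m}
    (hBJ : BJOrth H (single j j 1)) :
    (hH.unitarySign j j).re = 0 := by
  set c := (hH.unitarySign j j).re
  have key : ∀ l : ℝ, 0 ≤ 2 * δ * l * c + l ^ 2 := by
    intro l
    have hX := hH.add_real_smul_single l j
    set T := hX.unitarySign
    have hT := hX.unitarySign_mem_unitaryGroup
    have hBJl : ∑ i, |hH.eigenvalues i| ≤ (T * H).trace.re + l * (T j j).re := by
      have hnorm : traceNorm (H + (l : ℂ) • single j j 1) =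
          (T * (H + (l : ℂ) • single j j 1)).trace.re := by
        rw [hX.traceNorm_eq_sum_abs_eigenvalues_s8, hX.trace_unitarySign_mul_self]
        simp
      have := hBJ l
      rw [hH.traceNorm_eq_sum_abs_eigenvalues_s8, hnorm] at this
      simpa [Matrix.mul_add, trace_mul_single, mul_comm] using this
    have hgap := hH.re_trace_mul_add_le hT hδH
    have hdist := norm_sub_apply_sq_le hT hH.unitarySign_mem_unitaryGroup j
    rw [hX.isHermitian_unitarySign.eq] at hdist
    have hre : ((T j j).re - c) ^ 2 ≤ ‖T j j - hH.unitarySign j j‖ ^ 2 := by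
      rw [← sq_abs, ← Complex.sub_re]
      exact pow_le_pow_left₀ (abs_nonneg _) (Complex.abs_re_le_norm _) 2
    set g := Fintype.card m - (T * hH.unitarySign).trace.re
    set e := (T j j).re - c
    have hg : δ * g ≤ l * c + l * e := by simp only [e]; linarith
    nlinarith [mul_le_mul_of_nonneg_left hg (by positivity : (0 : ℝ) ≤ 2 * δ),
      mul_le_mul_of_nonneg_left (hre.trans hdist) (sq_nonneg δ), sq_nonneg (δ * e - l)]
  have hδc : δ * c = 0 :=
    pow_eq_zero_iff two_ne_zero |>.mp <| le_antisymm (by nlinarith [key (-(δ * c))]) (sq_nonneg _)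
  exact (mul_eq_zero.mp hδc).resolve_left hδ.ne'

end IsHermitian

end Matrix

open scoped ComplexOrder

theorem stmt_8 {n : ℕ} (hn : Odd n) (H : Matrix (Fin n) (Fin n) ℂ) (hH : H.IsHermitian)
    (hBJ : ∀ j : Fin n, BJOrth H (Matrix.single j j 1)) :
    ∃ i : Fin n, hH.eigenvalues i = 0 := by
  by_contra! hne
  have : Nonempty (Fin n) := ⟨⟨0, hn.pos⟩⟩
  set δ := Finset.univ.inf' Finset.univ_nonempty fun i => |hH.eigenvalues i|
  have hδ : 0 < δ := (Finset.lt_inf'_iff _).2 fun i _ => abs_pos.2 (hne i)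
  have hdiag (j : Fin n) : (hH.unitarySign j j).re = 0 :=
    hH.re_unitarySign_apply_self_eq_zero_of_bjOrth hδ
      (fun i => Finset.inf'_le _ (Finset.mem_univ i)) (hBJ j)
  have hsum : ∑ i, signOne (hH.eigenvalues i) = 0 := by
    have := congrArg Complex.re hH.trace_unitarySign
    simp only [trace, diag, Complex.re_sum, hdiag, Finset.sum_const_zero, Complex.intCast_re]
      at this
    exact_mod_cast this.symm
  have hodd := Finset.odd_sum_of_odd_card (s := Finset.univ)
    (fun i _ => signOne_eq_one_or_eq_neg_one (hH.eigenvalues i)) (by simpa using hn)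
  simp [hsum] at hodd
end

section
/- A 2×2 Hermitian matrix H is Birkhoff–James orthogonal in the trace norm to every diagonal matrix if and only if it is Birkhoff–James orthogonal in the trace norm to both e₁e₁* and e₂e₂*. -/
open Matrix BigOperators

open scoped ComplexOrder


/-!
For a `2 × 2` matrix the squared trace norm is `‖M‖_F² + 2 |det M|`, so everything reduces to
real inequalities. Orthogonality of `H = !![a, c; c̄, b]` to `e₁e₁*` says that
`l ↦ (a + l)² + 2 |ab - |c|² + lb|` is minimal at `l = 0`, and similarly for `e₂e₂*`;
differentiating at `0` (or comparing `l = ± ε` when `det H = 0`) forces `a = b` and `det H ≤ 0`.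
Conversely `‖M‖_F² - 2 Re (det M) = |M₀₀ - M̄₁₁|² + |M₀₁ + M̄₁₀|²` never exceeds `‖M‖_tr²`,
equals it at `M = H` when `a = b` and `det H ≤ 0`, and cannot decrease under a diagonal
perturbation, which leaves the off-diagonal entries alone.
-/

lemma traceNorm_nonneg {m : Type*} [Fintype m] [DecidableEq m] (A : Matrix m m ℂ) :
    0 ≤ traceNorm A :=
  Finset.sum_nonneg fun _ _ ↦ Real.sqrt_nonneg _

lemma traceNorm_sq_fin_two (M : Matrix (Fin 2) (Fin 2) ℂ) :
    traceNorm M ^ 2 = ∑ i, ∑ j, ‖M i j‖ ^ 2 + 2 * ‖M.det‖ := by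
  set hA := isHermitian_conjTranspose_mul_self M
  have h₀ := eigenvalues_conjTranspose_mul_self_nonneg M 0
  have h₁ := eigenvalues_conjTranspose_mul_self_nonneg M 1
  have hsum : hA.eigenvalues 0 + hA.eigenvalues 1 = ∑ i, ∑ j, ‖M i j‖ ^ 2 := by
    have h := congrArg Complex.re hA.trace_eq_sum_eigenvalues
    simp only [trace, diag_apply, mul_apply, conjTranspose_apply, RCLike.star_def,
      Complex.conj_mul', ← Complex.ofReal_pow, Fin.sum_univ_two, Complex.add_re,
      Complex.ofReal_re, Complex.coe_algebraMap] at h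
    simp only [Fin.sum_univ_two]
    linarith
  have hprod : hA.eigenvalues 0 * hA.eigenvalues 1 = ‖M.det‖ ^ 2 := by
    have h := congrArg Complex.re hA.det_eq_prod_eigenvalues
    rw [det_mul, det_conjTranspose, Fin.prod_univ_two, Complex.star_def, Complex.conj_mul'] at h
    simpa [← Complex.ofReal_pow] using h.symm
  rw [traceNorm, Fin.sum_univ_two, add_sq, Real.sq_sqrt h₀, Real.sq_sqrt h₁, mul_assoc,
    ← Real.sqrt_mul h₀, hprod, Real.sqrt_sq (norm_nonneg _), ← hsum]
  ring

lemma bjOrth_fin_two_iff (A B : Matrix (Fin 2) (Fin 2) ℂ) :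
    BJOrth A B ↔ ∀ l : ℝ, ∑ i, ∑ j, ‖A i j‖ ^ 2 + 2 * ‖A.det‖ ≤
      ∑ i, ∑ j, ‖(A + (l : ℂ) • B) i j‖ ^ 2 + 2 * ‖(A + (l : ℂ) • B).det‖ :=
  forall_congr' fun _ ↦ by
    rw [← traceNorm_sq_fin_two, ← traceNorm_sq_fin_two,
      pow_le_pow_iff_left₀ (traceNorm_nonneg _) (traceNorm_nonneg _) two_ne_zero]

lemma sum_norm_sq_sub_two_mul_re_det_fin_two (M : Matrix (Fin 2) (Fin 2) ℂ) :
    ∑ i, ∑ j, ‖M i j‖ ^ 2 - 2 * M.det.re =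
      ‖M 0 0 - star (M 1 1)‖ ^ 2 + ‖M 0 1 + star (M 1 0)‖ ^ 2 := by
  simp only [Fin.sum_univ_two, det_fin_two, Complex.sq_norm, Complex.normSq_apply,
    Complex.sub_re, Complex.sub_im, Complex.add_re, Complex.add_im, Complex.mul_re,
    Complex.star_def, Complex.conj_re, Complex.conj_im]
  ring

lemma Matrix.isDiag_single {n α : Type*} [DecidableEq n] [Zero α] (i : n) (r : α) :
    (single i i r).IsDiag := by
  rw [← diagonal_single]
  exact isDiag_diagonal _

theorem bjOrth_of_eq_star_of_det_nonpos {M D : Matrix (Fin 2) (Fin 2) ℂ}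
    (hM : M 0 0 = star (M 1 1)) (hdet : M.det ≤ 0) (hD : D.IsDiag) : BJOrth M D := by
  rw [bjOrth_fin_two_iff]
  intro l
  set N := M + (l : ℂ) • D
  have hoff : N 0 1 + star (N 1 0) = M 0 1 + star (M 1 0) := by
    simp [N, hD (show (0 : Fin 2) ≠ 1 by decide), hD (show (1 : Fin 2) ≠ 0 by decide)]
  have hnorm : ‖M.det‖ = -M.det.re := by
    obtain ⟨hre, him⟩ := Complex.nonpos_iff.mp hdet
    rw [← Complex.re_add_im M.det, him]
    simp [abs_of_nonpos hre]
  calc ∑ i, ∑ j, ‖M i j‖ ^ 2 + 2 * ‖M.det‖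
      = ‖M 0 1 + star (M 1 0)‖ ^ 2 := by
        rw [hnorm, mul_neg, ← sub_eq_add_neg, sum_norm_sq_sub_two_mul_re_det_fin_two, hM,
          sub_self, norm_zero]
        ring
    _ ≤ ‖N 0 0 - star (N 1 1)‖ ^ 2 + ‖N 0 1 + star (N 1 0)‖ ^ 2 := by
        rw [hoff]
        exact le_add_of_nonneg_left (by positivity)
    _ = ∑ i, ∑ j, ‖N i j‖ ^ 2 - 2 * N.det.re := (sum_norm_sq_sub_two_mul_re_det_fin_two N).symm
    _ ≤ ∑ i, ∑ j, ‖N i j‖ ^ 2 + 2 * ‖N.det‖ := by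
        linarith [neg_abs_le N.det.re, Complex.abs_re_le_norm N.det]

lemma add_sign_mul_eq_zero_of_forall_le {a b p : ℝ} (hp : p ≠ 0)
    (h : ∀ l : ℝ, a ^ 2 + 2 * |p| ≤ (a + l) ^ 2 + 2 * |p + l * b|) :
    a + SignType.sign p * b = 0 := by
  have hmin : IsLocalMin (fun l : ℝ ↦ (a + l) ^ 2 + 2 * |p + l * b|) 0 :=
    IsMinOn.isLocalMin (fun l _ ↦ by simpa using h l) Filter.univ_mem
  have hsq := ((hasDerivAt_id' (0 : ℝ)).const_add a).fun_pow 2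
  have habs := (hasDerivAt_abs (by simpa using hp : p + 0 * b ≠ 0)).comp 0
    (((hasDerivAt_id' (0 : ℝ)).mul_const b).const_add p)
  have hderiv := hmin.hasDerivAt_eq_zero (hsq.add (habs.const_mul 2))
  simp only [Nat.cast_ofNat, add_zero, Nat.add_one_sub_one, pow_one, mul_one, zero_mul,
    one_mul] at hderiv
  linarith

lemma abs_le_abs_of_forall_le {a b : ℝ} (h : ∀ l : ℝ, a ^ 2 ≤ (a + l) ^ 2 + 2 * |l * b|) :
    |a| ≤ |b| := by
  refine le_of_forall_pos_le_add fun ε hε ↦ abs_le.mpr ⟨?_, ?_⟩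
  · have := h ε
    rw [abs_mul, abs_of_pos hε] at this
    nlinarith
  · have := h (-ε)
    rw [abs_mul, abs_neg, abs_of_pos hε] at this
    nlinarith

theorem eq_and_mul_sub_nonpos_of_forall_le {a b k : ℝ} (hk : 0 ≤ k)
    (h₀ : ∀ l : ℝ, a ^ 2 + 2 * |a * b - k| ≤ (a + l) ^ 2 + 2 * |(a + l) * b - k|)
    (h₁ : ∀ l : ℝ, b ^ 2 + 2 * |a * b - k| ≤ (b + l) ^ 2 + 2 * |a * (b + l) - k|) :
    a = b ∧ a * b - k ≤ 0 := by
  set p := a * b - k with hp_def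
  replace h₀ : ∀ l : ℝ, a ^ 2 + 2 * |p| ≤ (a + l) ^ 2 + 2 * |p + l * b| := fun l ↦ by
    convert h₀ l using 4; ring
  replace h₁ : ∀ l : ℝ, b ^ 2 + 2 * |p| ≤ (b + l) ^ 2 + 2 * |p + l * a| := fun l ↦ by
    convert h₁ l using 4; ring
  rcases lt_trichotomy p 0 with hp | hp | hp
  · have := add_sign_mul_eq_zero_of_forall_le hp.ne h₀
    rw [sign_neg hp, SignType.coe_neg_one, neg_one_mul] at this
    exact ⟨by linarith, hp.le⟩
  · have hab := abs_le_abs_of_forall_le fun l ↦ by simpa [hp] using h₀ l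
    have hba := abs_le_abs_of_forall_le fun l ↦ by simpa [hp] using h₁ l
    refine ⟨?_, hp.le⟩
    rcases abs_eq_abs.mp (le_antisymm hab hba) with h | h
    · exact h
    · nlinarith
  · have := add_sign_mul_eq_zero_of_forall_le hp.ne' h₀
    rw [sign_pos hp, SignType.coe_one, one_mul, ← eq_neg_iff_add_eq_zero] at this
    rw [hp_def, this] at hp
    nlinarith [sq_nonneg b]

lemma Matrix.IsHermitian.exists_eq_fin_two {H : Matrix (Fin 2) (Fin 2) ℂ} (hH : H.IsHermitian) :
    ∃ (a b : ℝ) (c : ℂ), H = !![(a : ℂ), c; star c, (b : ℂ)] := by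
  refine ⟨(H 0 0).re, (H 1 1).re, H 0 1, ?_⟩
  ext i j
  fin_cases i <;> fin_cases j
  · exact (hH.coe_re_apply_self 0).symm
  · rfl
  · exact (hH.apply 1 0).symm
  · exact (hH.coe_re_apply_self 1).symm

lemma bjOrth_hermitian_real_diagonal_iff (a b x y : ℝ) (c : ℂ) :
    BJOrth !![(a : ℂ), c; star c, (b : ℂ)] (diagonal ![(x : ℂ), (y : ℂ)]) ↔
      ∀ l : ℝ, a ^ 2 + b ^ 2 + 2 * |a * b - ‖c‖ ^ 2| ≤
        (a + l * x) ^ 2 + (b + l * y) ^ 2 + 2 * |(a + l * x) * (b + l * y) - ‖c‖ ^ 2| := by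
  rw [bjOrth_fin_two_iff]
  refine forall_congr' fun l ↦ ?_
  have hsum : !![(a : ℂ), c; star c, (b : ℂ)] + (l : ℂ) • diagonal ![(x : ℂ), (y : ℂ)] =
      !![((a + l * x : ℝ) : ℂ), c; star c, ((b + l * y : ℝ) : ℂ)] := by
    ext i j; fin_cases i <;> fin_cases j <;> simp
  have hdet (u v : ℝ) : (!![(u : ℂ), c; star c, (v : ℂ)]).det = ((u * v - ‖c‖ ^ 2 : ℝ) : ℂ) := by
    simp [det_fin_two_of, Complex.mul_conj']
  rw [hsum, hdet, hdet]
  simp only [RCLike.star_def, of_apply, cons_val', cons_val_fin_one, Fin.sum_univ_two,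
    cons_val_zero, cons_val_one, Complex.norm_real, Real.norm_eq_abs, sq_abs, RCLike.norm_conj]
  constructor <;> intro h <;> linarith

theorem Matrix.IsHermitian.eq_star_and_det_nonpos_of_bjOrth_single
    {H : Matrix (Fin 2) (Fin 2) ℂ} (hH : H.IsHermitian)
    (h₀ : BJOrth H (single 0 0 1)) (h₁ : BJOrth H (single 1 1 1)) :
    H 0 0 = star (H 1 1) ∧ H.det ≤ 0 := by
  obtain ⟨a, b, c, rfl⟩ := hH.exists_eq_fin_two
  have e₀ : single 0 0 (1 : ℂ) = diagonal ![((1 : ℝ) : ℂ), ((0 : ℝ) : ℂ)] := by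
    ext i j; fin_cases i <;> fin_cases j <;> simp
  have e₁ : single 1 1 (1 : ℂ) = diagonal ![((0 : ℝ) : ℂ), ((1 : ℝ) : ℂ)] := by
    ext i j; fin_cases i <;> fin_cases j <;> simp
  rw [e₀, bjOrth_hermitian_real_diagonal_iff] at h₀
  rw [e₁, bjOrth_hermitian_real_diagonal_iff] at h₁
  simp only [mul_one, mul_zero, add_zero] at h₀ h₁
  obtain ⟨hab, hdet⟩ := eq_and_mul_sub_nonpos_of_forall_le (a := a) (b := b)
    (sq_nonneg ‖c‖) (fun l ↦ by linarith [h₀ l]) (fun l ↦ by linarith [h₁ l])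
  refine ⟨by simp [hab], ?_⟩
  simp only [det_fin_two_of, RCLike.star_def, Complex.mul_conj', ← Complex.ofReal_pow,
    ← Complex.ofReal_mul, ← Complex.ofReal_sub]
  exact_mod_cast hdet

theorem stmt_9 (H : Matrix (Fin 2) (Fin 2) ℂ) (hH : H.IsHermitian) :
    (∀ D : Matrix (Fin 2) (Fin 2) ℂ, D.IsDiag → BJOrth H D) ↔
      (BJOrth H (Matrix.single 0 0 1) ∧ BJOrth H (Matrix.single 1 1 1)) := by
  refine ⟨fun h ↦ ⟨h _ (isDiag_single 0 1), h _ (isDiag_single 1 1)⟩, fun ⟨h₀, h₁⟩ D hD ↦ ?_⟩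
  obtain ⟨hdiag, hdet⟩ := hH.eq_star_and_det_nonpos_of_bjOrth_single h₀ h₁
  exact bjOrth_of_eq_star_of_det_nonpos hdiag hdet hD
end

section
/- Let H be an n×n Hermitian matrix. If H has a polar decomposition H = UP in which U is a Hermitian unitary with all diagonal entries equal to 0 and P is positive semidefinite, then H is Birkhoff–James orthogonal in the trace norm to every diagonal matrix. -/
/-!
Write `H = U * P`. Then `‖H‖_tr = ‖P‖_tr = Re tr P = Re tr (Uᴴ H)`, and since `U` has zero
diagonal, `tr (Uᴴ D) = 0` for every diagonal `D`, so `Re tr P = Re tr (Uᴴ (H + λD))`. Finally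
`Re tr X ≤ ‖X‖_tr` for every `X`, and the trace norm is invariant under multiplication by the
unitary `Uᴴ`.
-/

open Matrix BigOperators

open scoped ComplexOrder

namespace Matrix

variable {m : Type*} [Fintype m]

lemma IsHermitian.trace_cfc_s10 [DecidableEq m] {𝕜 : Type*} [RCLike 𝕜] {A : Matrix m m 𝕜}
    (hA : A.IsHermitian) (f : ℝ → ℝ) :
    (cfc f A).trace = ∑ i, (f (hA.eigenvalues i) : 𝕜) := by
  rw [hA.cfc_eq, IsHermitian.cfc, Unitary.conjStarAlgAut_apply, trace_mul_cycle,
    Unitary.coe_star_mul_self, one_mul, trace_diagonal]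
  rfl

lemma re_apply_le_sqrt_conjTranspose_mul_self_apply (Y : Matrix m m ℂ) (i : m) :
    (Y i i).re ≤ √((Yᴴ * Y) i i).re := by
  have hdiag : ((Yᴴ * Y) i i).re = ∑ j, Complex.normSq (Y j i) := by
    simp [mul_apply, Complex.re_sum, Complex.normSq_apply]
  calc (Y i i).re ≤ ‖Y i i‖ := Complex.re_le_norm _
    _ = √(Complex.normSq (Y i i)) := Complex.norm_def _
    _ ≤ √((Yᴴ * Y) i i).re := by
      rw [hdiag]
      exact Real.sqrt_le_sqrt
        (Finset.single_le_sum (fun j _ => Complex.normSq_nonneg (Y j i)) (Finset.mem_univ i))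

lemma trace_mul_eq_zero_of_diag_eq_zero {A D : Matrix m m ℂ} (hA : ∀ j, A j j = 0)
    (hD : D.IsDiag) : (A * D).trace = 0 := by
  refine Finset.sum_eq_zero fun i _ => Finset.sum_eq_zero fun j _ => ?_
  rcases eq_or_ne i j with rfl | hij
  · simp [hA]
  · simp [hD hij.symm]

end Matrix

open Matrix

variable {m : Type*} [Fintype m] [DecidableEq m]

lemma traceNorm_eq_re_trace_cfc_sqrt (A : Matrix m m ℂ) :
    traceNorm A = (cfc Real.sqrt (Aᴴ * A)).trace.re := by
  simp [traceNorm, (isHermitian_conjTranspose_mul_self A).trace_cfc_s10, Complex.re_sum]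

lemma traceNorm_unitary_mul {W : Matrix m m ℂ} (hW : W ∈ unitaryGroup m ℂ) (A : Matrix m m ℂ) :
    traceNorm (W * A) = traceNorm A := by
  have hWW : Wᴴ * W = 1 := mem_unitaryGroup_iff'.mp hW
  rw [traceNorm_eq_re_trace_cfc_sqrt, traceNorm_eq_re_trace_cfc_sqrt, conjTranspose_mul,
    mul_assoc, ← mul_assoc Wᴴ, hWW, one_mul]

open scoped MatrixOrder in
lemma Matrix.PosSemidef.traceNorm_eq {P : Matrix m m ℂ} (hP : P.PosSemidef) :
    traceNorm P = P.trace.re := by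
  have hsqrt : cfc Real.sqrt (Pᴴ * P) = P := by
    rw [← cfcₙ_eq_cfc, ← star_eq_conjTranspose,
      ← CFC.sqrt_eq_real_sqrt _ (star_mul_self_nonneg P), hP.1.star_eq,
      CFC.sqrt_mul_self P hP.nonneg]
  rw [traceNorm_eq_re_trace_cfc_sqrt, hsqrt]

/- Conjugating by the eigenvector unitary `V` of `Xᴴ X` keeps the trace and makes `Yᴴ Y`
diagonal with the squared singular values on the diagonal; each `Re (Y i i)` is then bounded by
the norm of the `i`-th column of `Y`. -/
lemma re_trace_le_traceNorm (X : Matrix m m ℂ) : X.trace.re ≤ traceNorm X := by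
  set hM := isHermitian_conjTranspose_mul_self X
  set V : Matrix m m ℂ := (hM.eigenvectorUnitary : Matrix m m ℂ)
  set Y : Matrix m m ℂ := star V * X * V
  have hVV : V * star V = 1 := Unitary.coe_mul_star_self hM.eigenvectorUnitary
  have hY : Yᴴ * Y = diagonal (RCLike.ofReal ∘ hM.eigenvalues) := by
    rw [← hM.conjStarAlgAut_star_eigenvectorUnitary, Unitary.conjStarAlgAut_star_apply]
    simp only [Y, ← star_eq_conjTranspose, star_mul, star_star, mul_assoc]
    rw [← mul_assoc V (star V), hVV, one_mul]
  have htr : Y.trace = X.trace := by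
    rw [trace_mul_cycle, hVV, one_mul]
  calc X.trace.re = ∑ i, (Y i i).re := by rw [← htr, trace, Complex.re_sum]; rfl
    _ ≤ ∑ i, √((Yᴴ * Y) i i).re :=
      Finset.sum_le_sum fun i _ => re_apply_le_sqrt_conjTranspose_mul_self_apply Y i
    _ = traceNorm X := by simp [hY, traceNorm]

theorem stmt_10_general {n : ℕ} (H U P : Matrix (Fin n) (Fin n) ℂ)
    (hpolar : H = U * P) (hUunit : U ∈ Matrix.unitaryGroup (Fin n) ℂ)
    (hUdiag : ∀ j : Fin n, U j j = 0) (hP : P.PosSemidef) :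
    ∀ D : Matrix (Fin n) (Fin n) ℂ, D.IsDiag → BJOrth H D := by
  intro D hD l
  have hUH : Uᴴ * H = P := by
    rw [hpolar, ← mul_assoc, ← star_eq_conjTranspose, mem_unitaryGroup_iff'.mp hUunit, one_mul]
  have hUD : (Uᴴ * D).trace = 0 :=
    trace_mul_eq_zero_of_diag_eq_zero (fun j => by simp [hUdiag]) hD
  calc traceNorm H = traceNorm P := by rw [hpolar, traceNorm_unitary_mul hUunit]
    _ = (Uᴴ * (H + (l : ℂ) • D)).trace.re := by
      rw [hP.traceNorm_eq, mul_add, trace_add, Matrix.mul_smul, trace_smul, hUD, smul_zero,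
        add_zero, hUH]
    _ ≤ traceNorm (Uᴴ * (H + (l : ℂ) • D)) := re_trace_le_traceNorm _
    _ = traceNorm (H + (l : ℂ) • D) := traceNorm_unitary_mul (Unitary.star_mem hUunit) _

theorem stmt_10 {n : ℕ} (H U P : Matrix (Fin n) (Fin n) ℂ) (hH : H.IsHermitian)
    (hpolar : H = U * P) (hU : U.IsHermitian) (hUunit : U ∈ Matrix.unitaryGroup (Fin n) ℂ)
    (hUdiag : ∀ j : Fin n, U j j = 0) (hP : P.PosSemidef) :
    ∀ D : Matrix (Fin n) (Fin n) ℂ, D.IsDiag → BJOrth H D :=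
  stmt_10_general H U P hpolar hUunit hUdiag hP
end

section
/- Let P be an n×n orthogonal projection and 1 ≤ k ≤ n. Denote by ‖P‖₍ₖ₎ the maximum operator norm of a k×k principal submatrix of P, and by ‖P‖₍₁₎ its maximal diagonal entry. Then ‖P‖₍ₖ₎ ≥ ‖P‖₍₁₎ + ((k−1)/(n−1))(1 − ‖P‖₍₁₎) when n ≥ 2. -/
/-!
Let `d = P a a` be the largest diagonal entry and `u = P eₐ` the `a`-th column, so that
`‖u‖² = d` and `uₐ = d`. Let `s` consist of `a` and the `k - 1` other indices where `|uᵢ|` is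
largest; by averaging, `m := ∑_{i ∈ s} |uᵢ|² ≥ d² + (k - 1)/(n - 1) · (d - d²)`. If `x` is `u`
restricted to `s` and extended by zero, then `⟨u, P x⟩ = ⟨P u, x⟩ = m` and
`‖P x‖² = ⟨x, P x⟩ = ⟨x_s, P_s x_s⟩ ≤ ‖P_s‖ m`, so Cauchy–Schwarz gives `m² ≤ d ‖P_s‖ m`.
Hence `‖P_s‖ ≥ m / d ≥ d + (k - 1)/(n - 1) · (1 - d)`, while every `1 × 1` principal
submatrix has norm at most `d`.
-/

open Matrix BigOperators

open scoped ComplexOrder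

theorem Finset.exists_subset_card_eq_div_mul_sum_le {ι : Type*} (T : Finset ι) (f : ι → ℝ)
    {m : ℕ} (hm : m ≤ T.card) :
    ∃ s ⊆ T, s.card = m ∧ (m / T.card : ℝ) * ∑ i ∈ T, f i ≤ ∑ i ∈ s, f i := by
  classical
  suffices h : ∃ s ⊆ T, s.card = m ∧ (m : ℝ) * ∑ i ∈ T, f i ≤ T.card * ∑ i ∈ s, f i by
    obtain ⟨s, hsT, hs, h⟩ := h
    refine ⟨s, hsT, hs, ?_⟩
    rcases T.eq_empty_or_nonempty with rfl | hT
    · simp [Finset.subset_empty.mp hsT]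
    · rw [div_mul_eq_mul_div, div_le_iff₀ (by exact_mod_cast hT.card_pos)]
      linarith
  -- Dropping a smallest value from `s` does not decrease the average of `f` over `s`.
  refine Nat.decreasingInduction
    (motive := fun j _ => ∃ s ⊆ T, s.card = j ∧ (j : ℝ) * ∑ i ∈ T, f i ≤ T.card * ∑ i ∈ s, f i)
    ?_ ⟨T, subset_rfl, rfl, le_rfl⟩ hm
  rintro j - ⟨s, hsT, hs, h⟩
  obtain ⟨a, ha, hmin⟩ := s.exists_min_image f (Finset.card_pos.mp (by omega))
  refine ⟨s.erase a, (s.erase_subset a).trans hsT,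
    by rw [Finset.card_erase_of_mem ha, hs, Nat.add_sub_cancel], ?_⟩
  have herase : ∑ i ∈ s.erase a, f i = ∑ i ∈ s, f i - f a := by
    rw [← Finset.sum_erase_add s f ha, add_sub_cancel_right]
  have hcard_min := s.card_nsmul_le_sum f (f a) hmin
  rw [hs, nsmul_eq_mul] at hcard_min
  push_cast at h hcard_min
  have hj : (0 : ℝ) ≤ j := j.cast_nonneg
  have hN : (0 : ℝ) ≤ T.card := T.card.cast_nonneg
  rw [herase]
  refine le_of_mul_le_mul_left ?_ (by positivity : (0 : ℝ) < j + 1)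
  nlinarith [mul_le_mul_of_nonneg_left h hj, mul_le_mul_of_nonneg_left hcard_min hN]

namespace Matrix

variable {ι : Type*} [Fintype ι]

lemma star_dotProduct_self_eq_sum_norm_sq (x : ι → ℂ) :
    star x ⬝ᵥ x = ((∑ i, ‖x i‖ ^ 2 : ℝ) : ℂ) := by
  simp only [dotProduct, Pi.star_apply, RCLike.star_def, Complex.conj_mul', Complex.ofReal_sum]
  norm_cast

lemma norm_star_dotProduct_sq_le (x y : ι → ℂ) :
    ‖star x ⬝ᵥ y‖ ^ 2 ≤ (∑ i, ‖x i‖ ^ 2) * ∑ i, ‖y i‖ ^ 2 := by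
  have h := norm_inner_le_norm (𝕜 := ℂ) (WithLp.toLp 2 x) (WithLp.toLp 2 y)
  rw [EuclideanSpace.inner_toLp_toLp, dotProduct_comm] at h
  rw [← EuclideanSpace.norm_sq_eq, ← EuclideanSpace.norm_sq_eq, ← mul_pow]
  exact pow_le_pow_left₀ (norm_nonneg _) h 2

lemma dotProduct_submatrix_mulVec_eq {R : Type*} [NonUnitalNonAssocSemiring R]
    (A : Matrix ι ι R) {s : Finset ι} {v y : ι → R} (hv : ∀ i ∉ s, v i = 0)
    (hy : ∀ i ∉ s, y i = 0) :
    (fun i : s => v i) ⬝ᵥ (A.submatrix (↑) (↑) *ᵥ fun i : s => y i) = v ⬝ᵥ (A *ᵥ y) := by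
  have hsum (g : ι → R) (hg : ∀ i ∉ s, g i = 0) : ∑ i : s, g i = ∑ i, g i :=
    (Finset.sum_coe_sort s g).trans
      (Finset.sum_subset (Finset.subset_univ s) fun i _ hi => hg i hi)
  have hinner (i : ι) : ∑ j : s, A i j * y j = ∑ j, A i j * y j :=
    hsum (fun j => A i j * y j) fun j hj => by simp only [hy j hj, mul_zero]
  simp only [dotProduct, mulVec, submatrix_apply, hinner]
  exact hsum (fun i => v i * ∑ j, A i j * y j) fun i hi => by simp only [hv i hi, zero_mul]

variable [DecidableEq ι]

lemma IsHermitian.re_star_dotProduct_mulVec_le {H : Matrix ι ι ℂ} (hH : H.IsHermitian)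
    (x : ι → ℂ) :
    (star x ⬝ᵥ (H *ᵥ x)).re ≤ (⨆ i, hH.eigenvalues i) * ∑ i, ‖x i‖ ^ 2 := by
  set U : Matrix ι ι ℂ := (hH.eigenvectorUnitary : Matrix ι ι ℂ)
  set y := star U *ᵥ x
  have hstar_y : star y = star x ᵥ* U := by
    rw [star_mulVec, star_eq_conjTranspose, conjTranspose_conjTranspose]
  have hquad : star x ⬝ᵥ (H *ᵥ x) = ∑ i, (hH.eigenvalues i : ℂ) * ((‖y i‖ ^ 2 : ℝ) : ℂ) := by
    conv_lhs => rw [hH.spectral_theorem, Unitary.conjStarAlgAut_apply]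
    rw [← mulVec_mulVec, ← mulVec_mulVec, dotProduct_mulVec, ← hstar_y]
    simp only [dotProduct, mulVec_diagonal, Function.comp_apply, Pi.star_apply, RCLike.star_def]
    refine Finset.sum_congr rfl fun i _ => ?_
    change (starRingEnd ℂ) (y i) * ((hH.eigenvalues i : ℂ) * y i) = _
    rw [Complex.ofReal_pow, ← Complex.conj_mul']
    ring
  have hnorm : ∑ i, ‖y i‖ ^ 2 = ∑ i, ‖x i‖ ^ 2 := by
    have h : star y ⬝ᵥ y = star x ⬝ᵥ x := by
      rw [hstar_y, ← dotProduct_mulVec, mulVec_mulVec,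
        show U * star U = 1 from Unitary.coe_mul_star_self _, one_mulVec]
    rw [star_dotProduct_self_eq_sum_norm_sq, star_dotProduct_self_eq_sum_norm_sq] at h
    exact_mod_cast h
  rw [hquad, ← hnorm, Finset.mul_sum]
  simp only [Complex.re_sum, ← Complex.ofReal_mul, Complex.ofReal_re]
  gcongr with i
  exact le_ciSup (Set.finite_range _).bddAbove i

lemma opNorm_nonneg (A : Matrix ι ι ℂ) : 0 ≤ opNorm A :=
  Real.iSup_nonneg fun _ => Real.sqrt_nonneg _

lemma sum_norm_sq_mulVec_le_opNorm_sq (A : Matrix ι ι ℂ) (x : ι → ℂ) :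
    ∑ i, ‖(A *ᵥ x) i‖ ^ 2 ≤ opNorm A ^ 2 * ∑ i, ‖x i‖ ^ 2 := by
  have hAA := isHermitian_conjTranspose_mul_self A
  have hquad : ∑ i, ‖(A *ᵥ x) i‖ ^ 2 = (star x ⬝ᵥ ((Aᴴ * A) *ᵥ x)).re := by
    rw [← mulVec_mulVec, dotProduct_mulVec, ← star_mulVec, star_dotProduct_self_eq_sum_norm_sq,
      Complex.ofReal_re]
  have hsup : (⨆ i, hAA.eigenvalues i) ≤ opNorm A ^ 2 := by
    refine Real.iSup_le (fun i => ?_) (sq_nonneg _)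
    rw [← Real.sq_sqrt (eigenvalues_conjTranspose_mul_self_nonneg A i)]
    exact pow_le_pow_left₀ (Real.sqrt_nonneg _)
      (le_ciSup (f := fun j => √(hAA.eigenvalues j)) (Set.finite_range _).bddAbove i) 2
  rw [hquad]
  exact (hAA.re_star_dotProduct_mulVec_le x).trans (by gcongr)

lemma re_star_dotProduct_mulVec_le_opNorm (A : Matrix ι ι ℂ) (x : ι → ℂ) :
    (star x ⬝ᵥ (A *ᵥ x)).re ≤ opNorm A * ∑ i, ‖x i‖ ^ 2 := by
  have hsq : ‖star x ⬝ᵥ (A *ᵥ x)‖ ^ 2 ≤ (opNorm A * ∑ i, ‖x i‖ ^ 2) ^ 2 :=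
    calc _ ≤ (∑ i, ‖x i‖ ^ 2) * ∑ i, ‖(A *ᵥ x) i‖ ^ 2 := norm_star_dotProduct_sq_le _ _
      _ ≤ (∑ i, ‖x i‖ ^ 2) * (opNorm A ^ 2 * ∑ i, ‖x i‖ ^ 2) := by
          gcongr; exact sum_norm_sq_mulVec_le_opNorm_sq A x
      _ = _ := by ring
  have hnonneg : 0 ≤ opNorm A * ∑ i, ‖x i‖ ^ 2 := mul_nonneg (opNorm_nonneg A) (by positivity)
  exact (Complex.re_le_norm _).trans
    ((pow_le_pow_iff_left₀ (norm_nonneg _) hnonneg two_ne_zero).mp hsq)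

lemma opNorm_le_sqrt_sum_norm_sq (A : Matrix ι ι ℂ) : opNorm A ≤ √(∑ i, ∑ j, ‖A i j‖ ^ 2) := by
  have hAA := isHermitian_conjTranspose_mul_self A
  have htrace : ∑ i, hAA.eigenvalues i = ∑ i, ∑ j, ‖A i j‖ ^ 2 := by
    have h := congrArg Complex.re hAA.trace_eq_sum_eigenvalues
    simp only [trace, diag_apply, mul_apply, conjTranspose_apply, RCLike.star_def,
      Complex.conj_mul', Complex.re_sum, ← Complex.ofReal_pow, Complex.ofReal_re] at h
    rw [Finset.sum_comm, h]
    rfl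
  refine Real.iSup_le (fun i => Real.sqrt_le_sqrt ?_) (Real.sqrt_nonneg _)
  rw [← htrace]
  exact Finset.single_le_sum (fun j _ => eigenvalues_conjTranspose_mul_self_nonneg A j)
    (Finset.mem_univ i)

end Matrix

lemma Matrix.opNorm_submatrix_singleton_le {ι : Type*} [DecidableEq ι] (A : Matrix ι ι ℂ)
    (b : ι) :
    opNorm (A.submatrix ((↑) : ({b} : Finset ι) → ι) (↑)) ≤ ‖A b b‖ := by
  refine (opNorm_le_sqrt_sum_norm_sq _).trans_eq ?_
  simp

namespace IsStarProjection

variable {ι : Type*} [Fintype ι] {P : Matrix ι ι ℂ} (hP : IsStarProjection P)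
include hP

lemma star_mulVec_dotProduct (v y : ι → ℂ) :
    star (P *ᵥ v) ⬝ᵥ y = star (P *ᵥ v) ⬝ᵥ (P *ᵥ y) := by
  have hself : Pᴴ = P := hP.isSelfAdjoint
  rw [star_mulVec, ← dotProduct_mulVec, ← dotProduct_mulVec, mulVec_mulVec, hself,
    hP.isIdempotentElem.eq]

lemma star_dotProduct_mulVec_self (y : ι → ℂ) :
    star y ⬝ᵥ (P *ᵥ y) = star (P *ᵥ y) ⬝ᵥ (P *ᵥ y) := by
  have hself : Pᴴ = P := hP.isSelfAdjoint
  rw [star_mulVec, ← dotProduct_mulVec, mulVec_mulVec, hself, hP.isIdempotentElem.eq]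

lemma diag_eq_sum_norm_sq (a : ι) : P a a = ((∑ i, ‖P i a‖ ^ 2 : ℝ) : ℂ) := by
  conv_lhs => rw [← hP.isIdempotentElem.eq]
  rw [mul_apply, Complex.ofReal_sum]
  refine Finset.sum_congr rfl fun i _ => ?_
  rw [← hP.isSelfAdjoint.isHermitian.apply a i, RCLike.star_def, Complex.conj_mul']
  norm_cast

lemma diag_re_eq_sum_norm_sq (a : ι) : (P a a).re = ∑ i, ‖P i a‖ ^ 2 := by
  rw [hP.diag_eq_sum_norm_sq, Complex.ofReal_re]

lemma norm_diag_eq_re (a : ι) : ‖P a a‖ = (P a a).re := by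
  rw [hP.diag_re_eq_sum_norm_sq, hP.diag_eq_sum_norm_sq, Complex.norm_real, Real.norm_eq_abs,
    abs_of_nonneg (by positivity)]

lemma exists_diag_re_pos (hP0 : P ≠ 0) : ∃ a, 0 < (P a a).re := by
  obtain ⟨i, a, h⟩ : ∃ i a, P i a ≠ 0 := by
    by_contra! h
    exact hP0 (Matrix.ext h)
  refine ⟨a, ?_⟩
  rw [hP.diag_re_eq_sum_norm_sq]
  exact (pow_pos (norm_pos_iff.mpr h) 2).trans_le
    (Finset.single_le_sum (fun j _ => sq_nonneg ‖P j a‖) (Finset.mem_univ i))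

variable [DecidableEq ι]

lemma sum_norm_sq_le_diag_mul_opNorm (a : ι) (s : Finset ι) :
    ∑ i ∈ s, ‖P i a‖ ^ 2 ≤ (P a a).re * opNorm (P.submatrix ((↑) : s → ι) (↑)) := by
  set u : ι → ℂ := fun i => P i a
  have hu : P *ᵥ Pi.single a 1 = u := by ext i; simp [u]
  set y : ι → ℂ := fun i => if i ∈ s then u i else 0
  set m := ∑ i ∈ s, ‖P i a‖ ^ 2
  set o := opNorm (P.submatrix ((↑) : s → ι) (↑))
  have hy : ∀ i ∉ s, y i = 0 := fun i hi => if_neg hi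
  have hm : star u ⬝ᵥ (P *ᵥ y) = m := by
    rw [← hu, ← hP.star_mulVec_dotProduct, hu]
    simp only [dotProduct, Pi.star_apply, y, mul_ite, mul_zero, Finset.sum_ite_mem,
      Finset.univ_inter, RCLike.star_def, Complex.conj_mul', u, m]
    push_cast
    rfl
  have hPy : ∑ i, ‖(P *ᵥ y) i‖ ^ 2 ≤ o * m :=
    calc ∑ i, ‖(P *ᵥ y) i‖ ^ 2 = (star y ⬝ᵥ (P *ᵥ y)).re := by
          rw [hP.star_dotProduct_mulVec_self, star_dotProduct_self_eq_sum_norm_sq,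
            Complex.ofReal_re]
      _ = (star (fun i : s => y i) ⬝ᵥ (P.submatrix (↑) (↑) *ᵥ fun i : s => y i)).re := by
          rw [← P.dotProduct_submatrix_mulVec_eq (v := star y) (by simpa using hy) hy]
          rfl
      _ ≤ o * ∑ i : s, ‖y i‖ ^ 2 := re_star_dotProduct_mulVec_le_opNorm _ _
      _ = o * m := by
          rw [Finset.sum_coe_sort s (fun i => ‖y i‖ ^ 2)]
          refine congrArg _ (Finset.sum_congr rfl fun i hi => ?_)
          simp only [y, u, if_pos hi]
  have hd : ∑ i, ‖u i‖ ^ 2 = (P a a).re := by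
    rw [hP.diag_re_eq_sum_norm_sq]
  have hCS := norm_star_dotProduct_sq_le u (P *ᵥ y)
  rw [hm, Complex.norm_real, Real.norm_eq_abs, sq_abs, hd] at hCS
  have hm0 : 0 ≤ m := by positivity
  have hd0 : 0 ≤ (P a a).re := hd ▸ by positivity
  nlinarith [mul_nonneg hd0 (opNorm_nonneg (P.submatrix ((↑) : s → ι) (↑))),
    mul_le_mul_of_nonneg_left hPy hd0]

lemma exists_card_eq_diag_add_le_opNorm (a : ι) (ha : 0 < (P a a).re) {k : ℕ} (hk : 1 ≤ k)
    (hkn : k ≤ Fintype.card ι) :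
    ∃ s : Finset ι, s.card = k ∧
      (P a a).re + ((k : ℝ) - 1) / ((Fintype.card ι : ℝ) - 1) * (1 - (P a a).re) ≤
        opNorm (P.submatrix ((↑) : s → ι) (↑)) := by
  set d := (P a a).re
  set T := Finset.univ.erase a
  have hT : ∑ i ∈ T, ‖P i a‖ ^ 2 = d - d ^ 2 := by
    rw [Finset.sum_erase_eq_sub (Finset.mem_univ a), ← hP.diag_re_eq_sum_norm_sq,
      hP.norm_diag_eq_re]
  have hTcard : (T.card : ℝ) = Fintype.card ι - 1 := by
    rw [Finset.card_erase_of_mem (Finset.mem_univ a), Finset.card_univ,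
      Nat.cast_sub (hk.trans hkn), Nat.cast_one]
  obtain ⟨s', hs'T, hs'card, hs'⟩ :=
    T.exists_subset_card_eq_div_mul_sum_le (fun i => ‖P i a‖ ^ 2) (m := k - 1)
      (by rw [Finset.card_erase_of_mem (Finset.mem_univ a), Finset.card_univ]; omega)
  rw [hTcard, hT, Nat.cast_sub hk, Nat.cast_one] at hs'
  have ha' : a ∉ s' := fun h => Finset.notMem_erase a _ (hs'T h)
  refine ⟨insert a s', by rw [Finset.card_insert_of_notMem ha', hs'card]; omega, ?_⟩
  have key := hP.sum_norm_sq_le_diag_mul_opNorm a (insert a s')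
  rw [Finset.sum_insert ha', hP.norm_diag_eq_re] at key
  refine le_of_mul_le_mul_left ?_ ha
  linarith

end IsStarProjection

theorem stmt_13_general {n k : ℕ} (P : Matrix (Fin n) (Fin n) ℂ)
    (hP : P.IsHermitian) (hPproj : P * P = P) (hPne : P ≠ 0)
    (hk : 1 ≤ k) (hkn : k ≤ n) :
    sSup {r : ℝ | ∃ s : Finset (Fin n), s.card = 1 ∧ r = opNorm (principalSub P s)} +
        (((k : ℝ) - 1) / ((n : ℝ) - 1)) *
          (1 - sSup {r : ℝ | ∃ s : Finset (Fin n), s.card = 1 ∧ r = opNorm (principalSub P s)}) ≤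
      sSup {r : ℝ | ∃ s : Finset (Fin n), s.card = k ∧ r = opNorm (principalSub P s)} := by
  have hproj : IsStarProjection P := ⟨hPproj, hP⟩
  have : Nonempty (Fin n) := ⟨⟨0, by omega⟩⟩
  obtain ⟨a, -, hmax⟩ := Finset.univ.exists_max_image (fun i => (P i i).re) Finset.univ_nonempty
  obtain ⟨b, hb⟩ := hproj.exists_diag_re_pos hPne
  have ha : 0 < (P a a).re := hb.trans_le (hmax b (Finset.mem_univ b))
  have hS₁ : sSup {r : ℝ | ∃ s : Finset (Fin n), s.card = 1 ∧ r = opNorm (principalSub P s)} ≤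
      (P a a).re := by
    refine Real.sSup_le ?_ ha.le
    rintro r ⟨s, hs, rfl⟩
    obtain ⟨c, rfl⟩ := Finset.card_eq_one.mp hs
    refine (P.opNorm_submatrix_singleton_le c).trans ?_
    exact (hproj.norm_diag_eq_re c).trans_le (hmax c (Finset.mem_univ c))
  obtain ⟨s, hs, hbound⟩ := hproj.exists_card_eq_diag_add_le_opNorm a ha hk (by simpa using hkn)
  change _ ≤ opNorm (principalSub P s) at hbound
  have hSₖ : opNorm (principalSub P s) ≤
      sSup {r : ℝ | ∃ s : Finset (Fin n), s.card = k ∧ r = opNorm (principalSub P s)} :=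
    le_csSup ((Set.finite_range fun s : Finset (Fin n) => opNorm (principalSub P s)).subset
      (by rintro r ⟨s, -, rfl⟩; exact ⟨s, rfl⟩)).bddAbove ⟨s, hs, rfl⟩
  have hk' : (1 : ℝ) ≤ k := by exact_mod_cast hk
  have hkn' : (k : ℝ) ≤ n := by exact_mod_cast hkn
  have ht : ((k : ℝ) - 1) / ((n : ℝ) - 1) ≤ 1 := div_le_one_of_le₀ (by linarith) (by linarith)
  rw [Fintype.card_fin] at hbound
  nlinarith [mul_nonneg (sub_nonneg.2 ht) (sub_nonneg.2 hS₁)]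

theorem stmt_13 {n k : ℕ} (P : Matrix (Fin n) (Fin n) ℂ)
    (hP : P.IsHermitian) (hPproj : P * P = P) (hPne : P ≠ 0)
    (hn : 2 ≤ n) (hk : 1 ≤ k) (hkn : k ≤ n) :
    sSup {r : ℝ | ∃ s : Finset (Fin n), s.card = 1 ∧ r = opNorm (principalSub P s)} +
        (((k : ℝ) - 1) / ((n : ℝ) - 1)) *
          (1 - sSup {r : ℝ | ∃ s : Finset (Fin n), s.card = 1 ∧ r = opNorm (principalSub P s)}) ≤
      sSup {r : ℝ | ∃ s : Finset (Fin n), s.card = k ∧ r = opNorm (principalSub P s)} :=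
  stmt_13_general P hP hPproj hPne hk hkn
end

section
/- Let ρ be an n×n density matrix such that its modified trace distance of k-coherence equals 1 (equivalently, every k×k principal submatrix of the range projection of ρ has operator norm at most 1/2). Then rank(ρ) ≤ n(n + 1 − 2k)/(2(n − k)), for 1 ≤ k < n. -/
open Matrix BigOperators

open scoped ComplexOrder
open Finset

/-!
Let `P` be the range projection of `ρ`, `d i = P i i` and `r = ∑ i, d i = rank ρ`. Since `P` is an
orthogonal projection, `∑ j, |P i j| ^ 2 = d i`. A positive semidefinite matrix `A` with eigenvalues
in `[0, c]` has `∑ i j, |A i j| ^ 2 = tr A² ≤ c tr A`. Apply this to every `k × k` principal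
submatrix of `P` and sum over all `k`-subsets: a diagonal position lies in `C(n-1, k-1)` subsets and
an off-diagonal one in the fraction `(k - 1)/(n - 1)` of that many, which gives
`(n - k) ∑ i, d i ^ 2 ≤ (c (n - 1) - (k - 1)) r` with `c = 1/2`. Together with Cauchy–Schwarz,
`r ^ 2 ≤ n ∑ i, d i ^ 2`, this is `(n - k) r ≤ n ((n - 1)/2 - (k - 1))`.
-/

namespace Finset

variable {α : Type*} [Fintype α] [DecidableEq α]

theorem sum_sum_mem_comm {M : Type*} [AddCommMonoid M] (S : Finset (Finset α))
    (g : Finset α → α → M) :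
    ∑ s ∈ S, ∑ i ∈ s, g s i = ∑ i, ∑ s ∈ S with i ∈ s, g s i :=
  sum_comm' (by simp [and_comm])

theorem card_filter_mem_powersetCard {k : ℕ} (hk : 1 ≤ k) (i : α) :
    #{s ∈ powersetCard k univ | i ∈ s} = (Fintype.card α - 1).choose (k - 1) := by
  simpa [singleton_subset_iff] using
    card_filter_powersetCard_subset {i} univ k (subset_univ _) (by simpa using hk)

theorem card_filter_mem_mem_powersetCard_mul {k : ℕ} {i j : α} (hij : i ≠ j) :
    #{s ∈ powersetCard k univ | i ∈ s ∧ j ∈ s} * (Fintype.card α - 1)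
      = (Fintype.card α - 1).choose (k - 1) * (k - 1) := by
  have hpair : #{i, j} = 2 := card_pair hij
  obtain hk | hk := lt_or_ge k 2
  · have hempty : {s ∈ powersetCard k (univ : Finset α) | i ∈ s ∧ j ∈ s} = ∅ := by
      refine filter_eq_empty_iff.2 fun s hs hijs => ?_
      have := card_le_card (insert_subset_iff.2 ⟨hijs.1, singleton_subset_iff.2 hijs.2⟩)
      rw [hpair, (mem_powersetCard.1 hs).2] at this
      omega
    rw [hempty, show k - 1 = 0 by omega]
    simp
  · have hcount := card_filter_powersetCard_subset {i, j} univ k (subset_univ _) (hpair ▸ hk)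
    simp only [insert_subset_iff, singleton_subset_iff, hpair, card_univ] at hcount
    rw [hcount]
    obtain ⟨N, hN⟩ := Nat.exists_eq_add_of_le (hpair ▸ card_le_univ ({i, j} : Finset α))
    obtain ⟨l, rfl⟩ := Nat.exists_eq_add_of_le hk
    rw [hN, mul_comm]
    simpa [Nat.add_sub_cancel_left, add_comm, add_assoc] using Nat.add_one_mul_choose_eq N l

theorem sum_powersetCard_sum_mem {M : Type*} [AddCommMonoid M] {k : ℕ} (hk : 1 ≤ k)
    (f : α → M) :
    ∑ s ∈ powersetCard k univ, ∑ i ∈ s, f i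
      = (Fintype.card α - 1).choose (k - 1) • ∑ i, f i := by
  simp only [sum_sum_mem_comm, sum_const, card_filter_mem_powersetCard hk, smul_sum]

theorem sum_powersetCard_sum_mem_sum_mem {k : ℕ} (hk : 1 ≤ k) (f : α → α → ℝ) :
    (Fintype.card α - 1 : ℝ) * ∑ s ∈ powersetCard k univ, ∑ i ∈ s, ∑ j ∈ s, f i j
      = (Fintype.card α - 1).choose (k - 1)
          * ((k - 1) * ∑ i, ∑ j, f i j + (Fintype.card α - k) * ∑ i, f i i) := by
  set N := Fintype.card α
  set C := (N - 1).choose (k - 1)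
  simp only [sum_sum_mem_comm, filter_filter, sum_const, nsmul_eq_mul, mul_sum, mul_add,
    ← sum_add_distrib]
  refine sum_congr rfl fun i _ => ?_
  have hcastN : ((N - 1 : ℕ) : ℝ) = N - 1 := by
    rw [Nat.cast_sub (Fintype.card_pos_iff.2 ⟨i⟩), Nat.cast_one]
  have hcastk : ((k - 1 : ℕ) : ℝ) = k - 1 := by rw [Nat.cast_sub hk, Nat.cast_one]
  have hoff : ∀ j ∈ univ.erase i,
      (N - 1 : ℝ) * (#{s ∈ powersetCard k univ | i ∈ s ∧ j ∈ s} * f i j)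
        = C * ((k - 1) * f i j) := by
    intro j hj
    have hcount : #{s ∈ powersetCard k univ | i ∈ s ∧ j ∈ s} * (N - 1) = C * (k - 1) :=
      card_filter_mem_mem_powersetCard_mul (ne_of_mem_erase hj).symm
    replace hcount := congrArg (Nat.cast (R := ℝ)) hcount
    push_cast [hcastN, hcastk] at hcount
    linear_combination f i j * hcount
  have hself : #{s ∈ powersetCard k univ | i ∈ s ∧ i ∈ s} = C := by
    simpa only [and_self] using card_filter_mem_powersetCard hk i
  rw [← add_sum_erase _ _ (mem_univ i), sum_congr rfl hoff, hself,
    ← add_sum_erase _ _ (mem_univ i), ← mul_sum, ← mul_sum]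
  ring

end Finset

theorem card_sub_mul_sum_sq_le {α : Type*} [Fintype α] [DecidableEq α] {k : ℕ} {c : ℝ}
    {d : α → ℝ} {F : α → α → ℝ} (hk : 1 ≤ k) (hkN : k < Fintype.card α)
    (hdiag : ∀ i, F i i = d i ^ 2) (hrow : ∀ i, ∑ j, F i j = d i)
    (hsub : ∀ s : Finset α, #s = k → ∑ i ∈ s, ∑ j ∈ s, F i j ≤ c * ∑ i ∈ s, d i) :
    (Fintype.card α - k) * ∑ i, d i ^ 2
      ≤ (c * (Fintype.card α - 1) - (k - 1)) * ∑ i, d i := by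
  set N := Fintype.card α
  set C := (N - 1).choose (k - 1)
  have hC : (0 : ℝ) < C := by exact_mod_cast Nat.choose_pos (by omega)
  have hN : (1 : ℝ) ≤ N := by exact_mod_cast (by omega : 1 ≤ N)
  have hsum : ∑ s ∈ powersetCard k univ, ∑ i ∈ s, ∑ j ∈ s, F i j
      ≤ ∑ s ∈ powersetCard k univ, c * ∑ i ∈ s, d i :=
    sum_le_sum fun s hs => hsub s (mem_powersetCard.1 hs).2
  rw [← mul_sum, sum_powersetCard_sum_mem hk, nsmul_eq_mul] at hsum
  have hcount := sum_powersetCard_sum_mem_sum_mem hk F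
  simp only [hrow, hdiag] at hcount
  have key : (C : ℝ) * ((k - 1) * ∑ i, d i + (N - k) * ∑ i, d i ^ 2)
      ≤ C * (c * (N - 1) * ∑ i, d i) := by
    rw [← hcount]
    nlinarith [mul_le_mul_of_nonneg_left hsum (sub_nonneg.2 hN)]
  linarith [le_of_mul_le_mul_left key hC]

namespace Matrix

variable {m : Type*} {A : Matrix m m ℂ}

theorem IsHermitian.normSq_apply_self (hA : A.IsHermitian) (i : m) :
    Complex.normSq (A i i) = (A i i).re ^ 2 := by
  rw [Complex.normSq_apply, Complex.conj_eq_iff_im.1 (hA.apply i i), sq]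
  ring

variable [Fintype m]

theorem IsHermitian.re_mul_self_apply_self (hA : A.IsHermitian) (i : m) :
    ((A * A) i i).re = ∑ j, Complex.normSq (A i j) := by
  rw [mul_apply, Complex.re_sum]
  refine sum_congr rfl fun j _ => ?_
  rw [← hA.apply i j]
  simp [Complex.normSq_apply]

variable [DecidableEq m]

theorem IsHermitian.abs_eigenvalues_le_opNorm (hA : A.IsHermitian) (i : m) :
    |hA.eigenvalues i| ≤ opNorm A := by
  have hsq : hA.eigenvalues i ^ 2 ∈ spectrum ℝ (Aᴴ * A) := by
    rw [hA.eq, ← sq]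
    exact spectrum.pow_mem_pow A 2 (hA.eigenvalues_mem_spectrum_real i)
  rw [(isHermitian_conjTranspose_mul_self A).spectrum_real_eq_range_eigenvalues] at hsq
  obtain ⟨j, hj⟩ := hsq
  rw [← Real.sqrt_sq_eq_abs, ← hj, opNorm]
  exact le_ciSup (f := fun j ↦ √((isHermitian_conjTranspose_mul_self A).eigenvalues j))
    (Finite.bddAbove_range _) j

theorem IsHermitian.trace_sq_eq_sum_sq_eigenvalues (hA : A.IsHermitian) :
    (A ^ 2).trace = ∑ i, ((hA.eigenvalues i ^ 2 : ℝ) : ℂ) := by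
  conv_lhs => rw [hA.spectral_theorem]
  rw [← map_pow, Unitary.conjStarAlgAut_apply, trace_mul_cycle, Unitary.coe_star_mul_self,
    one_mul, diagonal_pow, trace_diagonal]
  simp

theorem IsHermitian.rank_pos (hA : A.IsHermitian) (h : A ≠ 0) : 0 < A.rank := by
  rw [hA.rank_eq_card_non_zero_eigs, Fintype.card_pos_iff]
  obtain ⟨i, hi⟩ := Function.ne_iff.1 (mt hA.eigenvalues_eq_zero_iff.1 h)
  exact ⟨⟨i, hi⟩⟩

theorem PosSemidef.sum_sum_normSq_le (hA : A.PosSemidef) {c : ℝ} (hc : opNorm A ≤ c) :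
    ∑ i, ∑ j, Complex.normSq (A i j) ≤ c * A.trace.re := by
  have hfrob : ∑ i, ∑ j, Complex.normSq (A i j) = (A ^ 2).trace.re := by
    simp only [sq, trace, diag_apply, Complex.re_sum, hA.1.re_mul_self_apply_self]
  rw [hfrob, hA.1.trace_sq_eq_sum_sq_eigenvalues, hA.1.trace_eq_sum_eigenvalues, Complex.re_sum,
    Complex.re_sum, mul_sum]
  refine sum_le_sum fun i _ => ?_
  have h0 := hA.eigenvalues_nonneg i
  have hle := (le_abs_self _).trans ((hA.1.abs_eigenvalues_le_opNorm i).trans hc)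
  show hA.1.eigenvalues i ^ 2 ≤ c * hA.1.eigenvalues i
  nlinarith

theorem PosSemidef.sum_sum_normSq_principalSub_le {n : ℕ} {P : Matrix (Fin n) (Fin n) ℂ}
    (hP : P.PosSemidef) (s : Finset (Fin n)) {c : ℝ} (h : opNorm (principalSub P s) ≤ c) :
    ∑ i ∈ s, ∑ j ∈ s, Complex.normSq (P i j) ≤ c * ∑ i ∈ s, (P i i).re := by
  have := (hP.submatrix ((↑) : s → Fin n)).sum_sum_normSq_le h
  simp only [trace, diag_apply, submatrix_apply, Complex.re_sum] at this
  rw [← sum_coe_sort s, ← sum_coe_sort s]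
  simpa only [← sum_coe_sort s] using this

end Matrix

section RangeProjection

variable {n : ℕ} {H : Matrix (Fin n) (Fin n) ℂ}

theorem rangeProj_eq_conjStarAlgAut (hH : H.IsHermitian) :
    rangeProj hH = Unitary.conjStarAlgAut ℂ _ hH.eigenvectorUnitary
      (diagonal fun i => if hH.eigenvalues i ≠ 0 then 1 else 0) := rfl

theorem rangeProj_mul_self (hH : H.IsHermitian) :
    rangeProj hH * rangeProj hH = rangeProj hH := by
  rw [rangeProj_eq_conjStarAlgAut, ← map_mul, diagonal_mul_diagonal]
  congr 2
  funext i
  split_ifs <;> simp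

theorem posSemidef_rangeProj (hH : H.IsHermitian) : (rangeProj hH).PosSemidef :=
  (posSemidef_diagonal_iff.2 fun i => by split_ifs <;> simp).mul_mul_conjTranspose_same _

theorem trace_rangeProj (hH : H.IsHermitian) : (rangeProj hH).trace = H.rank := by
  rw [rangeProj_eq_conjStarAlgAut, Unitary.conjStarAlgAut_apply, trace_mul_cycle,
    Unitary.coe_star_mul_self, one_mul, trace_diagonal, sum_boole,
    hH.rank_eq_card_non_zero_eigs, Fintype.card_subtype]

end RangeProjection

theorem stmt_19 {n k : ℕ} (ρ : Matrix (Fin n) (Fin n) ℂ)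
    (hρ : ρ.PosSemidef) (hρtr : ρ.trace = 1) (hk : 1 ≤ k) (hkn : k < n)
    (hnorm : ∀ s : Finset (Fin n), s.card = k →
      opNorm (principalSub (rangeProj hρ.1) s) ≤ 1 / 2) :
    (ρ.rank : ℝ) ≤ (n : ℝ) * ((n : ℝ) + 1 - 2 * (k : ℝ)) / (2 * ((n : ℝ) - (k : ℝ))) := by
  set P := rangeProj hρ.1
  have hP : P.PosSemidef := posSemidef_rangeProj hρ.1
  have hr : ∑ i, (P i i).re = ρ.rank := by
    simpa [trace, Complex.re_sum] using congrArg Complex.re (trace_rangeProj hρ.1)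
  have hrpos : (0 : ℝ) < ρ.rank := by
    exact_mod_cast hρ.1.rank_pos fun h => by simp [h] at hρtr
  have havg := card_sub_mul_sum_sq_le (F := fun i j => Complex.normSq (P i j)) (c := 1 / 2)
    hk (by simpa using hkn) hP.1.normSq_apply_self
    (fun i => by rw [← hP.1.re_mul_self_apply_self, rangeProj_mul_self])
    fun s hs => hP.sum_sum_normSq_principalSub_le s (hnorm s hs)
  have hCS := sq_sum_le_card_mul_sum_sq (s := univ) (f := fun i => (P i i).re)
  simp only [hr, card_univ, Fintype.card_fin] at havg hCS
  have hkn' : (k : ℝ) < n := by exact_mod_cast hkn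
  rw [le_div_iff₀ (by linarith)]
  have hmul : (ρ.rank : ℝ) * (ρ.rank * (2 * (n - k))) ≤ ρ.rank * (n * (n + 1 - 2 * k)) := by
    nlinarith
  exact le_of_mul_le_mul_left hmul hrpos
end
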